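/- arXiv:1805.03476 — 2 statements merged into one kernel-verified Lean document; each statement's English description precedes it below -/
import Mathlib

section
/- There is an absolute constant C such that for every z ∈ ℕ there exists a finite sequence w ∈ {0,1,2}* of length at most z^C with the following properties for every connected 3-regular graph G on n vertices and every starting vertex: (1) an agent following w in G visits at least min{z, n} distinct vertices; (2) following w yields a closed walk in G (the agent ends at its starting vertex). (In the paper, w is produced by a deterministic O(log z)-space algorithm.) -/
noncomputable section
open scoped Classical

/-- An undirected graph with locally labeled ports: vertex `v` has degree `deg v`,
and for a port `i < deg v`, `nbr v i` is the other endpoint of the edge with port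
number `i` at `v`, while `back v i` is the port number of this edge at the other
endpoint. -/
structure PGraph (V : Type) where
  deg : V → ℕ
  nbr : V → ℕ → V
  back : V → ℕ → ℕ

namespace PGraph

variable {V : Type}

/-- Well-formedness: positive degrees, ports of an edge match up at both
endpoints, no self-loops and no parallel edges. -/
def Wf (G : PGraph V) : Prop :=
  (∀ v, 0 < G.deg v) ∧
  (∀ v i, i < G.deg v → G.back v i < G.deg (G.nbr v i)) ∧
  (∀ v i, i < G.deg v → G.nbr (G.nbr v i) (G.back v i) = v) ∧
  (∀ v i, i < G.deg v → G.back (G.nbr v i) (G.back v i) = i) ∧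
  (∀ v i, i < G.deg v → G.nbr v i ≠ v) ∧
  (∀ v, Set.InjOn (G.nbr v) (Set.Iio (G.deg v)))

/-- Connectivity of a port-labeled graph. -/
def Conn (G : PGraph V) : Prop :=
  ∀ a b : V, Relation.ReflTransGen (fun x y => ∃ i, i < G.deg x ∧ G.nbr x i = y) a b

end PGraph

variable {V : Type}

/-- One step of an agent following an exploration sequence: at the pair
(current vertex, port of the edge back to the previous vertex) and offset `e`,
the agent leaves through the port `(lab + e) mod deg`. -/
def exStep (G : PGraph V) (c : V × ℕ) (e : ℕ) : V × ℕ :=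
  let i := (c.2 + e) % G.deg c.1
  (G.nbr c.1 i, G.back c.1 i)

/-- Position of an agent starting at `v0` after following the first `j` offsets
of the exploration sequence `w` (initially the back-port is `0`). -/
def exPos (G : PGraph V) (v0 : V) (w : List ℕ) (j : ℕ) : V :=
  ((w.take j).foldl (exStep G) (v0, 0)).1

/-!
A *patch* is the view of a 3-regular port-labelled graph from a vertex set `S`: ports leading out
of `S` dangle. If the walk along `w` from `v₀` visits fewer than `min z n` vertices, the visited
set induces a patch on fewer than `z` vertices which is reversible, connected, has a dangling port
(as `G` is connected and `S ≠ V`), and which the walk never leaves.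

For the adjacency matrix `A` of such a patch on `s` vertices,
`3‖x‖² - xᵀAx = ∑ (3 - deg u) x_u² + ½ ∑ A_uv (x_u - x_v)²`, and walking from any vertex to the
dangling one bounds `‖x‖²` by `4s³` times the right-hand side. Hence `‖A‖ ≤ 3 - 1/(4s³)`, so at
most `(3 - 1/(4s³))^T √s` of the `3^T` words of length `T` stay inside the patch from a given
start. A union bound over all patches on fewer than `z` vertices shows that some word of length
`T = 12z³(3z+1)(3z+3)` leaves every one of them. Appending its retrace closes the walk.
-/

open Matrix Finset

lemma SimpleGraph.Walk.abs_sub_le_length_mul {W : Type*} {G : SimpleGraph W} (x : W → ℝ) {r : ℝ}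
    (hr : ∀ u v, G.Adj u v → |x u - x v| ≤ r) {a b : W} (p : G.Walk a b) :
    |x a - x b| ≤ p.length * r := by
  induction p with
  | nil => simp
  | @cons a c b h q ih =>
    rw [length_cons, Nat.cast_succ, add_mul, one_mul, add_comm]
    exact (abs_sub_le _ (x c) _).trans (add_le_add (hr a c h) ih)

lemma SimpleGraph.Reachable.sq_le_of_forall_adj {W : Type*} [Fintype W] {G : SimpleGraph W}
    {u u₀ : W} (h : G.Reachable u u₀) (x : W → ℝ) {r : ℝ} (hr₀ : 0 ≤ r)
    (hr : ∀ a b, G.Adj a b → |x a - x b| ≤ r) :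
    x u ^ 2 ≤ 2 * (Fintype.card W * r) ^ 2 + 2 * x u₀ ^ 2 := by
  obtain ⟨p, hp⟩ := h.some.toPath
  have hlen : (p.length : ℝ) ≤ Fintype.card W := by exact_mod_cast hp.length_lt.le
  have hfar : |x u - x u₀| ≤ Fintype.card W * r :=
    (p.abs_sub_le_length_mul x hr).trans (by gcongr)
  have hsq : (x u - x u₀) ^ 2 ≤ (Fintype.card W * r) ^ 2 := by
    rw [← sq_abs]
    exact pow_le_pow_left₀ (abs_nonneg _) hfar 2
  nlinarith [sq_nonneg (x u - 2 * x u₀)]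

lemma ContinuousLinearMap.norm_pow_apply_le {E : Type*} [SeminormedAddCommGroup E]
    [NormedSpace ℝ E] (T : E →L[ℝ] E) (t : ℕ) (y : E) : ‖(T ^ t) y‖ ≤ ‖T‖ ^ t * ‖y‖ := by
  induction t with
  | zero => simp
  | succ t ih =>
    rw [pow_succ', pow_succ', mul_assoc]
    exact T.le_opNorm_of_le ih

section SpectralBound

variable {ι : Type*} [Fintype ι]

lemma Matrix.sub_dotProduct_mulVec_eq {B : Matrix ι ι ℝ} (hB : B.IsSymm) (d : ℝ) (x : ι → ℝ) :
    d * (x ⬝ᵥ x) - x ⬝ᵥ B *ᵥ x =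
      ∑ u, (d - ∑ v, B u v) * x u ^ 2 + (∑ u, ∑ v, B u v * (x u - x v) ^ 2) / 2 := by
  have hswap : ∑ u, ∑ v, B u v * x v ^ 2 = ∑ u, ∑ v, B u v * x u ^ 2 := by
    rw [Finset.sum_comm]
    exact Finset.sum_congr rfl fun u _ => Finset.sum_congr rfl fun v _ => by rw [hB.apply]
  have hexpand : ∑ u, ∑ v, B u v * (x u - x v) ^ 2 =
      ∑ u, ∑ v, B u v * x u ^ 2 + ∑ u, ∑ v, B u v * x v ^ 2 - 2 * (x ⬝ᵥ B *ᵥ x) := by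
    simp only [dotProduct, mulVec, Finset.mul_sum, ← Finset.sum_add_distrib,
      ← Finset.sum_sub_distrib]
    exact Finset.sum_congr rfl fun u _ => Finset.sum_congr rfl fun v _ => by ring
  have hdiag : ∑ u, (d - ∑ v, B u v) * x u ^ 2 =
      d * (x ⬝ᵥ x) - ∑ u, ∑ v, B u v * x u ^ 2 := by
    simp only [dotProduct, sub_mul, Finset.sum_mul, Finset.mul_sum, Finset.sum_sub_distrib, sq]
  rw [hexpand, hswap, hdiag]
  ring

lemma Matrix.dotProduct_mulVec_le_of_reachable {B : Matrix ι ι ℝ} (hB : B.IsSymm)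
    (hnonneg : ∀ u v, 0 ≤ B u v) {d : ℝ} (hrow : ∀ u, ∑ v, B u v ≤ d) (G : SimpleGraph ι)
    (hadj : ∀ u v, G.Adj u v → 1 ≤ B u v) {u₀ : ι} (hu₀ : ∑ v, B u₀ v ≤ d - 1)
    (hreach : ∀ u, G.Reachable u u₀) (x : ι → ℝ) :
    x ⬝ᵥ B *ᵥ x ≤ (d - 1 / (4 * Fintype.card ι ^ 3)) * (x ⬝ᵥ x) := by
  set D := ∑ u, (d - ∑ v, B u v) * x u ^ 2
  set R := (∑ u, ∑ v, B u v * (x u - x v) ^ 2) / 2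
  have hterm : ∀ u v, 0 ≤ B u v * (x u - x v) ^ 2 := fun u v =>
    mul_nonneg (hnonneg u v) (sq_nonneg _)
  have hD : x u₀ ^ 2 ≤ D := by
    refine le_trans ?_ (Finset.single_le_sum (fun u _ => mul_nonneg (sub_nonneg.2 (hrow u))
      (sq_nonneg (x u))) (Finset.mem_univ u₀))
    nlinarith [sq_nonneg (x u₀)]
  have hR : 0 ≤ R := div_nonneg (Finset.sum_nonneg fun u _ =>
    Finset.sum_nonneg fun v _ => hterm u v) zero_le_two
  have hedge : ∀ a b, G.Adj a b → |x a - x b| ≤ √(2 * R) := by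
    intro a b hab
    refine Real.abs_le_sqrt ?_
    have : B a b * (x a - x b) ^ 2 ≤ 2 * R := by
      rw [mul_div_cancel₀ _ two_ne_zero]
      exact (Finset.single_le_sum (fun v _ => hterm a v) (Finset.mem_univ b)).trans
        (Finset.single_le_sum (fun u _ => Finset.sum_nonneg fun v _ => hterm u v)
          (Finset.mem_univ a))
    nlinarith [hadj a b hab, sq_nonneg (x a - x b)]
  set c : ℝ := (Fintype.card ι : ℝ)
  have hc : 1 ≤ c := Nat.one_le_cast.2 (Fintype.card_pos_iff.2 ⟨u₀⟩)
  have hpoint : ∀ u, x u ^ 2 ≤ 4 * c ^ 2 * (D + R) := by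
    intro u
    have hu := (hreach u).sq_le_of_forall_adj x (Real.sqrt_nonneg _) hedge
    rw [mul_pow, Real.sq_sqrt (by positivity)] at hu
    change x u ^ 2 ≤ 2 * (c ^ 2 * (2 * R)) + 2 * x u₀ ^ 2 at hu
    have hDc : D ≤ c ^ 2 * D :=
      le_mul_of_one_le_left ((sq_nonneg _).trans hD) (one_le_pow₀ hc)
    linarith [sq_nonneg (x u₀)]
  have hsum : x ⬝ᵥ x ≤ 4 * c ^ 3 * (D + R) := by
    calc x ⬝ᵥ x = ∑ u, x u ^ 2 := by simp [dotProduct, sq]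
      _ ≤ ∑ _u : ι, 4 * c ^ 2 * (D + R) := Finset.sum_le_sum fun u _ => hpoint u
      _ = 4 * c ^ 3 * (D + R) := by simp [c]; ring
  rw [show D + R = d * (x ⬝ᵥ x) - x ⬝ᵥ B *ᵥ x from (B.sub_dotProduct_mulVec_eq hB d x).symm]
    at hsum
  rw [sub_mul, one_div_mul_eq_div, le_sub_comm, div_le_iff₀ (by positivity)]
  linarith

lemma Matrix.abs_dotProduct_mulVec_le_of_nonneg {B : Matrix ι ι ℝ}
    (hnonneg : ∀ u v, 0 ≤ B u v) {M : ℝ} (hM : ∀ x, x ⬝ᵥ B *ᵥ x ≤ M * (x ⬝ᵥ x)) (x : ι → ℝ) :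
    |x ⬝ᵥ B *ᵥ x| ≤ M * (x ⬝ᵥ x) := by
  have habs : (fun u => |x u|) ⬝ᵥ (fun u => |x u|) = x ⬝ᵥ x := by
    simp only [dotProduct, abs_mul_abs_self]
  calc |x ⬝ᵥ B *ᵥ x| ≤ (fun u => |x u|) ⬝ᵥ B *ᵥ (fun u => |x u|) := by
        simp only [dotProduct, mulVec, Finset.mul_sum]
        refine (Finset.abs_sum_le_sum_abs _ _).trans (Finset.sum_le_sum fun u _ => ?_)
        refine (Finset.abs_sum_le_sum_abs _ _).trans (Finset.sum_le_sum fun v _ => ?_)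
        rw [abs_mul, abs_mul, abs_of_nonneg (hnonneg u v)]
    _ ≤ M * (x ⬝ᵥ x) := habs ▸ hM _

lemma Matrix.norm_toEuclideanCLM_le_of_abs_dotProduct_mulVec_le [DecidableEq ι]
    {B : Matrix ι ι ℝ} (hB : B.IsSymm) {M : ℝ} (hM0 : 0 ≤ M)
    (hM : ∀ x, |x ⬝ᵥ B *ᵥ x| ≤ M * (x ⬝ᵥ x)) : ‖toEuclideanCLM (𝕜 := ℝ) B‖ ≤ M := by
  have hsymm : (toEuclideanCLM (𝕜 := ℝ) B : EuclideanSpace ℝ ι →ₗ[ℝ] _).IsSymmetric :=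
    isSymmetric_toEuclideanLin_iff.mpr (isHermitian_iff_isSelfAdjoint.mpr hB)
  rw [ContinuousLinearMap.norm_eq_iSup_rayleighQuotient _ hsymm]
  refine ciSup_le fun x => ?_
  rw [ContinuousLinearMap.rayleighQuotient, ContinuousLinearMap.reApplyInnerSelf_apply,
    RCLike.re_to_real, real_inner_comm, inner_toEuclideanCLM, abs_div, abs_sq,
    ← real_inner_self_eq_norm_sq, EuclideanSpace.inner_eq_star_dotProduct, star_trivial]
  exact div_le_of_le_mul₀ (dotProduct_self_star_nonneg _) hM0 (hM x.ofLp)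

lemma Matrix.pow_mulVec_apply_le [DecidableEq ι] (B : Matrix ι ι ℝ) (t : ℕ) (x : ι → ℝ)
    (u : ι) : (B ^ t *ᵥ x) u ≤ ‖toEuclideanCLM (𝕜 := ℝ) B‖ ^ t * ‖WithLp.toLp 2 x‖ := by
  calc (B ^ t *ᵥ x) u ≤ ‖(toEuclideanCLM (𝕜 := ℝ) (B ^ t) (WithLp.toLp 2 x)).ofLp u‖ :=
        le_abs_self _
    _ ≤ ‖toEuclideanCLM (𝕜 := ℝ) (B ^ t) (WithLp.toLp 2 x)‖ := PiLp.norm_apply_le _ _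
    _ ≤ ‖toEuclideanCLM (𝕜 := ℝ) B‖ ^ t * ‖WithLp.toLp 2 x‖ := by
      rw [map_pow]
      exact ContinuousLinearMap.norm_pow_apply_le _ _ _

end SpectralBound

/-- Bounds the norm of the adjacency matrix of a valid patch on `c` vertices. -/
def decayRate (c : ℕ) : ℝ := 3 - 1 / (4 * c ^ 3)

lemma decayRate_nonneg {c : ℕ} (hc : 1 ≤ c) : 0 ≤ decayRate c := by
  have : 1 / (4 * (c : ℝ) ^ 3) ≤ 1 := by
    rw [div_le_one (by positivity)]
    nlinarith [one_le_pow₀ (n := 3) (Nat.one_le_cast.2 hc : (1 : ℝ) ≤ c)]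
  unfold decayRate
  linarith

lemma decayRate_mono {c d : ℕ} (hc : 1 ≤ c) (hcd : c ≤ d) : decayRate c ≤ decayRate d := by
  unfold decayRate
  have : (1 : ℝ) ≤ c := Nat.one_le_cast.2 hc
  gcongr

def wordLength (z : ℕ) : ℕ := 12 * z ^ 3 * ((3 * z + 1) * (3 * z + 3))

lemma mul_decayRate_pow_wordLength_lt {z : ℕ} (hz : 1 ≤ z) :
    (z : ℝ) ^ 3 * (3 * z + 1) ^ (3 * z) * decayRate z ^ wordLength z < 3 ^ wordLength z := by
  set K := (3 * z + 1) * (3 * z + 3)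
  set T := wordLength z
  have hz' : (1 : ℝ) ≤ z := Nat.one_le_cast.2 hz
  have hdecay : decayRate z ^ T ≤ 3 ^ T * Real.exp (-K) := by
    have hδ : 0 ≤ 1 - 1 / (12 * (z : ℝ) ^ 3) := by
      rw [sub_nonneg, div_le_one (by positivity)]
      nlinarith [one_le_pow₀ (n := 3) hz']
    have hT : (1 / (12 * (z : ℝ) ^ 3)) * T = K := by
      simp only [T, K, wordLength]
      push_cast
      field_simp
    calc decayRate z ^ T = 3 ^ T * (1 - 1 / (12 * (z : ℝ) ^ 3)) ^ T := by
          rw [← mul_pow, decayRate]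
          congr 1
          field_simp
          ring
      _ ≤ 3 ^ T * Real.exp (-(1 / (12 * (z : ℝ) ^ 3))) ^ T := by
          gcongr
          exact Real.one_sub_le_exp_neg _
      _ = 3 ^ T * Real.exp (-K) := by
          rw [← Real.exp_nat_mul, ← hT]
          ring_nf
  have hprefactor : (z : ℝ) ^ 3 * (3 * z + 1) ^ (3 * z) < Real.exp K := by
    have hbase : (3 * z + 1 : ℝ) < Real.exp (3 * z + 1) := by
      linarith [Real.add_one_lt_exp (by positivity : (3 * z + 1 : ℝ) ≠ 0)]
    calc (z : ℝ) ^ 3 * (3 * z + 1) ^ (3 * z)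
        ≤ (3 * (z : ℝ) + 1) ^ 3 * (3 * z + 1) ^ (3 * z) := by
          gcongr
          linarith
      _ = (3 * (z : ℝ) + 1) ^ (3 * z + 3) := by ring
      _ < Real.exp (3 * z + 1) ^ (3 * z + 3) := by gcongr
      _ = Real.exp K := by
          rw [← Real.exp_nat_mul]
          simp only [K]
          push_cast
          ring_nf
  calc (z : ℝ) ^ 3 * (3 * z + 1) ^ (3 * z) * decayRate z ^ T
      ≤ (z : ℝ) ^ 3 * (3 * z + 1) ^ (3 * z) * (3 ^ T * Real.exp (-K)) := by gcongr
    _ < Real.exp K * (3 ^ T * Real.exp (-K)) := by gcongr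
    _ = 3 ^ T := by rw [Real.exp_neg]; field_simp

lemma two_mul_wordLength_le {z : ℕ} (hz : 2 ≤ z) : 2 * wordLength z ≤ z ^ 15 := by
  have h576 : 576 ≤ z ^ 10 := (by norm_num : 576 ≤ 2 ^ 10).trans (Nat.pow_le_pow_left hz 10)
  calc 2 * wordLength z ≤ 2 * (12 * z ^ 3 * (4 * z * (6 * z))) := by
        unfold wordLength
        gcongr <;> omega
    _ = 576 * z ^ 5 := by ring
    _ ≤ z ^ 10 * z ^ 5 := by gcongr
    _ = z ^ 15 := by ring

/-- Port `p` of vertex `a` either leads to `(b, q)`, i.e. to vertex `b` entered through its port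
`q`, or out of the patch (`none`). -/
abbrev Patch (α : Type) : Type := α → Fin 3 → Option (α × Fin 3)

namespace Patch

variable {α : Type} (f : Patch α)

def run : α × Fin 3 → List (Fin 3) → Option (α × Fin 3)
  | c, [] => some c
  | c, e :: w => (f c.1 (c.2 + e)).bind fun c' => run c' w

def Adj (a b : α) : Prop := ∃ p, (f a p).map Prod.fst = some b

def Reversible : Prop := ∀ a p b q, f a p = some (b, q) → f b q = some (a, p)

structure Valid : Prop where
  reversible : f.Reversible
  exists_exit : ∃ a p, f a p = none
  connected : ∀ a b, Relation.ReflTransGen f.Adj a b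

def adjMatrix : Matrix α α ℝ := fun a b => #{p | (f a p).map Prod.fst = some b}

def confinedCount (t : ℕ) (c : α × Fin 3) : ℕ :=
  #{σ : Fin t → Fin 3 | (f.run c (List.ofFn σ)).isSome}

lemma confinedCount_succ (t : ℕ) (c : α × Fin 3) :
    f.confinedCount (t + 1) c = ∑ e, (f c.1 (c.2 + e)).elim 0 (f.confinedCount t) := by
  simp only [confinedCount, Finset.card_filter]
  rw [← (Fin.consEquiv fun _ => Fin 3).sum_comp, Fintype.sum_prod_type]
  refine Finset.sum_congr rfl fun e _ => ?_
  simp only [Fin.consEquiv, Equiv.coe_fn_mk, List.ofFn_succ, Fin.cons_zero, Fin.cons_succ, run]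
  cases f c.1 (c.2 + e) with
  | none => simp
  | some c' => simp only [Option.bind_some, Option.elim_some, confinedCount, Finset.card_filter]

variable {f}

lemma reflTransGen_adj_of_run_eq_some :
    ∀ {c c' : α × Fin 3} {w : List (Fin 3)}, f.run c w = some c' →
      Relation.ReflTransGen f.Adj c.1 c'.1
  | _, _, [], h => by cases h; rfl
  | c, c', e :: w, h => by
    rw [run, Option.bind_eq_some_iff] at h
    obtain ⟨c'', hc'', hrun⟩ := h
    exact .head ⟨c.2 + e, by simp [hc'']⟩ (reflTransGen_adj_of_run_eq_some hrun)

lemma Reversible.adj_symm (hf : f.Reversible) {a b : α} (h : f.Adj a b) : f.Adj b a := by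
  obtain ⟨p, hp⟩ := h
  obtain ⟨⟨b', q⟩, hpq, rfl⟩ := Option.map_eq_some_iff.1 hp
  exact ⟨q, by simp [hf _ _ _ _ hpq]⟩

lemma Valid.of_reflTransGen (hf : f.Reversible) (hexit : ∃ a p, f a p = none) (a₀ : α)
    (hreach : ∀ a, Relation.ReflTransGen f.Adj a₀ a) : f.Valid where
  reversible := hf
  exists_exit := hexit
  connected a b := by
    have : Std.Symm f.Adj := ⟨fun _ _ => hf.adj_symm⟩
    exact (Std.Symm.symm (r := Relation.ReflTransGen f.Adj) _ _ (hreach a)).trans (hreach b)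

lemma Reversible.card_le_card (hf : f.Reversible) (a b : α) :
    #{p | (f a p).map Prod.fst = some b} ≤ #{q | (f b q).map Prod.fst = some a} := by
  refine Finset.card_le_card_of_injOn (fun p => ((f a p).map Prod.snd).getD 0) ?_ ?_
  · intro p hp
    simp only [coe_filter, Finset.mem_univ, true_and, Set.mem_ofPred_eq,
      Option.map_eq_some_iff] at hp ⊢
    obtain ⟨⟨b', q⟩, hpq, rfl⟩ := hp
    exact ⟨(a, p), by simp [hpq, hf _ _ _ _ hpq]⟩
  · intro p hp p' hp' h
    simp only [coe_filter, Finset.mem_univ, true_and, Set.mem_ofPred_eq,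
      Option.map_eq_some_iff] at hp hp'
    obtain ⟨⟨b₁, q₁⟩, hpq, rfl⟩ := hp
    obtain ⟨⟨b₂, q₂⟩, hpq', rfl⟩ := hp'
    simp only [hpq, hpq', Option.map_some, Option.getD_some] at h
    subst h
    simpa using (hf _ _ _ _ hpq).symm.trans (hf _ _ _ _ hpq')

lemma Reversible.adjMatrix_isSymm (hf : f.Reversible) : f.adjMatrix.IsSymm := by
  ext a b
  simp only [transpose_apply, adjMatrix]
  exact_mod_cast le_antisymm (hf.card_le_card b a) (hf.card_le_card a b)

lemma one_le_adjMatrix {a b : α} (h : f.Adj a b) : 1 ≤ f.adjMatrix a b := by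
  obtain ⟨p, hp⟩ := h
  exact Nat.one_le_cast.2 (Finset.card_pos.2 ⟨p, by simpa using hp⟩)

variable [Fintype α]

lemma sum_elim_eq_adjMatrix_mulVec (g : α → ℝ) (a : α) :
    ∑ p, (f a p).elim 0 (fun c => g c.1) = (f.adjMatrix *ᵥ g) a := by
  simp only [mulVec, dotProduct, adjMatrix, Finset.card_filter, Nat.cast_sum, Finset.sum_mul]
  rw [Finset.sum_comm]
  refine Finset.sum_congr rfl fun p _ => ?_
  cases f a p <;> simp

lemma sum_adjMatrix_row (a : α) : ∑ b, f.adjMatrix a b = #{p | f a p ≠ none} := by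
  have h := f.sum_elim_eq_adjMatrix_mulVec 1 a
  simp only [mulVec, dotProduct, Pi.one_apply, mul_one] at h
  rw [← h, Finset.card_filter, Nat.cast_sum]
  refine Finset.sum_congr rfl fun p _ => ?_
  cases f a p <;> simp

lemma confinedCount_le_adjMatrix_pow_mulVec (t : ℕ) (a : α) (l : Fin 3) :
    (f.confinedCount t (a, l) : ℝ) ≤ (f.adjMatrix ^ t *ᵥ 1) a := by
  induction t generalizing a l with
  | zero => simp [confinedCount, run]
  | succ t ih =>
    rw [confinedCount_succ, Nat.cast_sum, pow_succ', ← mulVec_mulVec,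
      ← sum_elim_eq_adjMatrix_mulVec]
    calc ∑ e, (((f a (l + e)).elim 0 (f.confinedCount t) : ℕ) : ℝ)
        ≤ ∑ e, (f a (l + e)).elim 0 (fun c => (f.adjMatrix ^ t *ᵥ 1) c.1) := by
          refine Finset.sum_le_sum fun e _ => ?_
          cases f a (l + e) <;> simp [ih]
      _ = ∑ p, (f a p).elim 0 (fun c => (f.adjMatrix ^ t *ᵥ 1) c.1) :=
          Fintype.sum_equiv (Equiv.addLeft l) _ _ fun _ => rfl

lemma Valid.dotProduct_adjMatrix_mulVec_le (hf : f.Valid) (x : α → ℝ) :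
    x ⬝ᵥ f.adjMatrix *ᵥ x ≤ decayRate (Fintype.card α) * (x ⬝ᵥ x) := by
  have : Std.Symm f.Adj := ⟨fun _ _ => hf.reversible.adj_symm⟩
  obtain ⟨a₀, p₀, hp₀⟩ := hf.exists_exit
  refine dotProduct_mulVec_le_of_reachable (hf.reversible.adjMatrix_isSymm)
    (fun _ _ => Nat.cast_nonneg _) (fun a => ?_) (SimpleGraph.fromEdgeSet (Sym2.fromRel this))
    (fun a b hab => ?_) (u₀ := a₀) ?_ (fun a => ?_) x
  · rw [sum_adjMatrix_row]
    exact_mod_cast (Finset.card_filter_le _ _).trans_eq (by simp)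
  · exact one_le_adjMatrix (Sym2.fromRel_prop.1 ((SimpleGraph.fromEdgeSet_adj _).1 hab).1)
  · rw [sum_adjMatrix_row]
    have : #{p | f a₀ p ≠ none} ≤ #(univ.erase p₀) :=
      Finset.card_le_card fun p hp => by
        simp only [Finset.mem_filter] at hp
        exact Finset.mem_erase.2 ⟨fun h => hp.2 (h ▸ hp₀), Finset.mem_univ _⟩
    rw [Finset.card_erase_of_mem (Finset.mem_univ _)] at this
    norm_num at this ⊢
    exact_mod_cast this
  · rw [SimpleGraph.reachable_fromEdgeSet_fromRel_eq_reflTransGen]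
    exact hf.connected a a₀

lemma Valid.confinedCount_le (hf : f.Valid) (t : ℕ) (a : α) (l : Fin 3) :
    (f.confinedCount t (a, l) : ℝ) ≤ decayRate (Fintype.card α) ^ t * √(Fintype.card α) := by
  have hnorm := norm_toEuclideanCLM_le_of_abs_dotProduct_mulVec_le (hf.reversible.adjMatrix_isSymm)
    (decayRate_nonneg (Fintype.card_pos_iff.2 ⟨a⟩))
    (abs_dotProduct_mulVec_le_of_nonneg (fun _ _ => Nat.cast_nonneg _)
      hf.dotProduct_adjMatrix_mulVec_le)
  calc (f.confinedCount t (a, l) : ℝ) ≤ (f.adjMatrix ^ t *ᵥ 1) a :=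
        confinedCount_le_adjMatrix_pow_mulVec t a l
    _ ≤ ‖toEuclideanCLM (𝕜 := ℝ) f.adjMatrix‖ ^ t * ‖WithLp.toLp 2 (1 : α → ℝ)‖ :=
        pow_mulVec_apply_le _ t 1 a
    _ ≤ _ := by
        rw [EuclideanSpace.norm_eq]
        simp only [Pi.one_apply, norm_one, one_pow, Finset.sum_const, Finset.card_univ,
          nsmul_eq_mul, mul_one]
        gcongr

end Patch

lemma Patch.card_fin_le {s z : ℕ} (hsz : s ≤ z) :
    Fintype.card (Patch (Fin s)) ≤ (3 * z + 1) ^ (3 * z) := by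
  simp only [Patch, Fintype.card_fun, Fintype.card_option, Fintype.card_prod, Fintype.card_fin,
    ← pow_mul]
  calc (s * 3 + 1) ^ (3 * s) ≤ (3 * z + 1) ^ (3 * s) := Nat.pow_le_pow_left (by omega) _
    _ ≤ (3 * z + 1) ^ (3 * z) := Nat.pow_le_pow_right (by omega) (by omega)

lemma Patch.sum_confinedCount_le {s z : ℕ} (hsz : s < z) (T : ℕ) :
    ∑ f ∈ univ.filter (fun f : Patch (Fin s) => f.Valid), ∑ a, (f.confinedCount T (a, 0) : ℝ)
      ≤ (3 * z + 1) ^ (3 * z) * (z * (decayRate z ^ T * z)) := by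
  have hz : 1 ≤ z := by omega
  have hR : 0 ≤ decayRate z ^ T * z :=
    mul_nonneg (pow_nonneg (decayRate_nonneg hz) T) (Nat.cast_nonneg _)
  have hterm : ∀ f : Patch (Fin s), f.Valid → ∀ a,
      (f.confinedCount T (a, 0) : ℝ) ≤ decayRate z ^ T * z := by
    intro f hf a
    have hs : 1 ≤ s := Fin.pos a
    refine (hf.confinedCount_le T a 0).trans ?_
    rw [Fintype.card_fin]
    exact mul_le_mul (pow_le_pow_left₀ (decayRate_nonneg hs) (decayRate_mono hs hsz.le) T)
      (Real.sqrt_le_iff.2 ⟨Nat.cast_nonneg _, by norm_cast; nlinarith⟩) (Real.sqrt_nonneg _)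
      (pow_nonneg (decayRate_nonneg hz) T)
  calc ∑ f ∈ univ.filter (fun f : Patch (Fin s) => f.Valid), ∑ a, (f.confinedCount T (a, 0) : ℝ)
      ≤ ∑ f ∈ univ.filter (fun f : Patch (Fin s) => f.Valid), (z * (decayRate z ^ T * z)) := by
        refine Finset.sum_le_sum fun f hf => (Finset.sum_le_card_nsmul _ _ _ fun a _ =>
          hterm f (Finset.mem_filter.1 hf).2 a).trans ?_
        rw [nsmul_eq_mul, Finset.card_univ, Fintype.card_fin]
        gcongr
    _ ≤ (3 * z + 1) ^ (3 * z) * (z * (decayRate z ^ T * z)) := by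
        rw [Finset.sum_const, nsmul_eq_mul]
        refine mul_le_mul_of_nonneg_right ?_ (mul_nonneg (Nat.cast_nonneg _) hR)
        exact_mod_cast (Finset.card_filter_le _ _).trans (Patch.card_fin_le hsz.le)

lemma Patch.exists_word_forall_valid_run_eq_none {z T : ℕ}
    (hT : (z : ℝ) ^ 3 * (3 * z + 1) ^ (3 * z) * decayRate z ^ T < 3 ^ T) :
    ∃ σ : Fin T → Fin 3, ∀ s < z, ∀ f : Patch (Fin s), f.Valid →
      ∀ a, f.run (a, 0) (List.ofFn σ) = none := by
  by_contra! hbad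
  have hcover : (univ : Finset (Fin T → Fin 3)) ⊆ (range z).biUnion fun s =>
      (univ.filter fun f : Patch (Fin s) => f.Valid).biUnion fun f => univ.biUnion fun a =>
        univ.filter fun σ : Fin T → Fin 3 => (f.run (a, 0) (List.ofFn σ)).isSome := by
    intro σ _
    obtain ⟨s, hs, f, hf, a, ha⟩ := hbad σ
    simp only [Finset.mem_biUnion, Finset.mem_range, Finset.mem_filter, Finset.mem_univ,
      true_and]
    exact ⟨s, hs, f, hf, a, Option.isSome_iff_ne_none.2 ha⟩
  have hcount : 3 ^ T ≤ ∑ s ∈ range z, ∑ f ∈ univ.filter (fun f : Patch (Fin s) => f.Valid),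
      ∑ a, f.confinedCount T (a, 0) :=
    calc 3 ^ T = #(univ : Finset (Fin T → Fin 3)) := by simp
      _ ≤ _ := Finset.card_le_card hcover
      _ ≤ _ := Finset.card_biUnion_le.trans (Finset.sum_le_sum fun s _ =>
          Finset.card_biUnion_le.trans (Finset.sum_le_sum fun f _ => Finset.card_biUnion_le))
  have htotal : (3 : ℝ) ^ T ≤ z * ((3 * z + 1) ^ (3 * z) * (z * (decayRate z ^ T * z))) :=
    calc (3 : ℝ) ^ T ≤ ∑ s ∈ range z, ∑ f ∈ univ.filter (fun f : Patch (Fin s) => f.Valid),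
          ∑ a, (f.confinedCount T (a, 0) : ℝ) := by exact_mod_cast hcount
      _ ≤ ∑ s ∈ range z, (3 * z + 1) ^ (3 * z) * (z * (decayRate z ^ T * z)) :=
          Finset.sum_le_sum fun s hs => Patch.sum_confinedCount_le (Finset.mem_range.1 hs) T
      _ = _ := by rw [Finset.sum_const, Finset.card_range, nsmul_eq_mul]
  linarith

namespace PGraph

variable {G : PGraph V}

lemma back_lt_three (hwf : G.Wf) (h3 : ∀ v, G.deg v = 3) (v : V) {p : ℕ} (hp : p < 3) :
    G.back v p < 3 := by
  simpa [h3] using hwf.2.1 v p (by rwa [h3])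

lemma exStep_fin (h3 : ∀ v, G.deg v = 3) (v : V) (l e : Fin 3) :
    exStep G (v, l) e = (G.nbr v (l + e : Fin 3), G.back v (l + e : Fin 3)) := by
  simp [exStep, h3, Fin.val_add]

lemma exists_port_not_mem (hconn : G.Conn) {S : Set V} {x y : V} (hx : x ∈ S) (hy : y ∉ S) :
    ∃ v ∈ S, ∃ p < G.deg v, G.nbr v p ∉ S := by
  by_contra! hclosed
  suffices ∀ b, Relation.ReflTransGen (fun x y => ∃ i, i < G.deg x ∧ G.nbr x i = y) x b → b ∈ S
    from hy (this y (hconn x y))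
  intro b hb
  induction hb with
  | refl => exact hx
  | tail _ hstep ih =>
    obtain ⟨i, hi, rfl⟩ := hstep
    exact hclosed _ ih i hi

def inducedPatch (G : PGraph V) {α : Type} (ι : α → V) : Patch α := fun a p =>
  if h : ∃ b, ι b = G.nbr (ι a) p then some (h.choose, Fin.ofNat 3 (G.back (ι a) p)) else none

section InducedPatch

variable {α : Type} {ι : α → V}

lemma inducedPatch_eq_some_iff (hι : ι.Injective) {a b : α} {p q : Fin 3} :
    G.inducedPatch ι a p = some (b, q) ↔
      G.nbr (ι a) p = ι b ∧ q = Fin.ofNat 3 (G.back (ι a) p) := by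
  unfold inducedPatch
  split_ifs with h
  · simp only [Option.some.injEq, Prod.mk.injEq]
    constructor
    · rintro ⟨rfl, rfl⟩
      exact ⟨h.choose_spec.symm, rfl⟩
    · rintro ⟨hb, rfl⟩
      exact ⟨hι (h.choose_spec.trans hb), rfl⟩
  · simp only [false_iff, not_and]
    exact fun hb => absurd ⟨b, hb.symm⟩ h

lemma inducedPatch_eq_none_iff {a : α} {p : Fin 3} :
    G.inducedPatch ι a p = none ↔ G.nbr (ι a) p ∉ Set.range ι := by
  unfold inducedPatch
  split_ifs with h <;> simp [Set.mem_range, h]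

lemma reversible_inducedPatch (hwf : G.Wf) (h3 : ∀ v, G.deg v = 3) (hι : ι.Injective) :
    (G.inducedPatch ι).Reversible := by
  intro a p b q
  rw [inducedPatch_eq_some_iff hι, inducedPatch_eq_some_iff hι]
  rintro ⟨hb, rfl⟩
  have hp : (p : ℕ) < G.deg (ι a) := by rw [h3]; exact p.isLt
  rw [Fin.val_ofNat, Nat.mod_eq_of_lt (back_lt_three hwf h3 _ p.isLt), ← hb, hwf.2.2.1 _ _ hp,
    hwf.2.2.2.1 _ _ hp, Fin.ofNat_val_eq_self]
  exact ⟨rfl, rfl⟩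

lemma map_run_inducedPatch (hwf : G.Wf) (h3 : ∀ v, G.deg v = 3) (hι : ι.Injective) :
    ∀ (w : List (Fin 3)) (a : α) (l : Fin 3),
      (∀ i ≤ w.length, (((w.take i).map Fin.val).foldl (exStep G) (ι a, l)).1 ∈ Set.range ι) →
      ((G.inducedPatch ι).run (a, l) w).map (Prod.map ι Fin.val) =
        some ((w.map Fin.val).foldl (exStep G) (ι a, l))
  | [], a, l, _ => rfl
  | e :: w, a, l, hpos => by
    obtain ⟨b, hb⟩ := hpos 1 (by simp)
    simp only [List.take_succ_cons, List.take_zero, List.map_cons, List.map_nil,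
      List.foldl_cons, List.foldl_nil, exStep_fin h3] at hb
    set q : Fin 3 := Fin.ofNat 3 (G.back (ι a) (l + e : Fin 3))
    have hstep : exStep G (ι a, l) e = (ι b, (q : ℕ)) := by
      rw [exStep_fin h3, hb, Fin.val_ofNat, Nat.mod_eq_of_lt (back_lt_three hwf h3 _ (Fin.isLt _))]
    have hpatch : G.inducedPatch ι a (l + e) = some (b, q) :=
      (inducedPatch_eq_some_iff hι).2 ⟨hb.symm, rfl⟩
    simp only [Patch.run, hpatch, Option.bind_some, List.map_cons, List.foldl_cons, hstep]
    refine map_run_inducedPatch hwf h3 hι w b q fun i hi => ?_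
    simpa [hstep] using hpos (i + 1) (by simpa using hi)

end InducedPatch

section Visited

variable [DecidableEq V]

def visited (G : PGraph V) (v₀ : V) (w : List ℕ) : Finset V :=
  (range (w.length + 1)).image (exPos G v₀ w)

lemma exPos_mem_visited (v₀ : V) (w : List ℕ) {j : ℕ} (hj : j ≤ w.length) :
    exPos G v₀ w j ∈ G.visited v₀ w :=
  Finset.mem_image.2 ⟨j, Finset.mem_range.2 (by omega), rfl⟩

lemma visited_subset_append (v₀ : V) (w w' : List ℕ) :
    G.visited v₀ w ⊆ G.visited v₀ (w ++ w') := by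
  intro v hv
  simp only [visited, Finset.mem_image, Finset.mem_range] at hv
  obtain ⟨j, hj, rfl⟩ := hv
  have hpos : exPos G v₀ (w ++ w') j = exPos G v₀ w j := by
    simp only [exPos, List.take_append_of_le_length (by omega : j ≤ w.length)]
  exact hpos ▸ exPos_mem_visited v₀ _ (by simp; omega)

variable {α : Type} {ι : α → V}

lemma exists_run_inducedPatch_take (hwf : G.Wf) (h3 : ∀ v, G.deg v = 3) (hι : ι.Injective)
    (w : List (Fin 3)) {a₀ : α} {v₀ : V} (ha₀ : ι a₀ = v₀)
    (hvisited : ↑(G.visited v₀ (w.map Fin.val)) ⊆ Set.range ι) {j : ℕ} (hj : j ≤ w.length) :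
    ∃ c, (G.inducedPatch ι).run (a₀, 0) (w.take j) = some c ∧
      ι c.1 = exPos G v₀ (w.map Fin.val) j := by
  have hstart : (ι a₀, ((0 : Fin 3) : ℕ)) = (v₀, 0) := by rw [ha₀, Fin.val_zero]
  have hrun := map_run_inducedPatch hwf h3 hι (w.take j) a₀ 0 fun i _ => by
    rw [List.take_take, List.map_take, hstart]
    exact hvisited (exPos_mem_visited v₀ _ (by simp; omega))
  obtain ⟨c, hc, hcw⟩ := Option.map_eq_some_iff.1 hrun
  refine ⟨c, hc, ?_⟩
  rw [exPos, ← List.map_take, ← hstart, ← hcw]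
  rfl

lemma valid_inducedPatch_of_range_eq_visited [Fintype V] (hwf : G.Wf) (hconn : G.Conn)
    (h3 : ∀ v, G.deg v = 3) (hι : ι.Injective) {w : List (Fin 3)} {v₀ : V}
    (hrange : Set.range ι = G.visited v₀ (w.map Fin.val))
    (hcard : #(G.visited v₀ (w.map Fin.val)) < Fintype.card V) {a₀ : α} (ha₀ : ι a₀ = v₀) :
    (G.inducedPatch ι).Valid := by
  set S := G.visited v₀ (w.map Fin.val)
  have hv₀ : v₀ ∈ S := exPos_mem_visited v₀ _ (Nat.zero_le _)
  have hvisited : ↑S ⊆ Set.range ι := hrange.symm.subset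
  refine .of_reflTransGen (reversible_inducedPatch hwf h3 hι) ?_ a₀ fun a => ?_
  · obtain ⟨y, hy⟩ : ∃ y, y ∉ S := by
      by_contra! h
      have := Finset.card_le_card fun y (_ : y ∈ univ) => h y
      rw [Finset.card_univ] at this
      omega
    obtain ⟨v, hv, p, hp, hout⟩ := exists_port_not_mem hconn (S := ↑S) hv₀ hy
    obtain ⟨a, rfl⟩ := hvisited hv
    exact ⟨a, ⟨p, h3 (ι a) ▸ hp⟩, inducedPatch_eq_none_iff.2 (hrange ▸ hout)⟩
  · obtain ⟨j, hj, hja⟩ := Finset.mem_image.1 (hrange ▸ Set.mem_range_self a : ι a ∈ (S : Set V))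
    obtain ⟨c, hc, hcj⟩ :=
      exists_run_inducedPatch_take hwf h3 hι w ha₀ hvisited (j := j) (by simp at hj; omega)
    have := Patch.reflTransGen_adj_of_run_eq_some hc
    rwa [hι (hcj.trans hja)] at this

theorem min_le_card_visited [Fintype V] (hwf : G.Wf) (hconn : G.Conn) (h3 : ∀ v, G.deg v = 3)
    {z : ℕ} {w : List (Fin 3)}
    (hw : ∀ s < z, ∀ f : Patch (Fin s), f.Valid → ∀ a, f.run (a, 0) w = none) (v₀ : V) :
    min z (Fintype.card V) ≤ #(G.visited v₀ (w.map Fin.val)) := by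
  by_contra! hlt
  set S := G.visited v₀ (w.map Fin.val)
  set ι : Fin #S → V := Subtype.val ∘ S.equivFin.symm
  have hι : ι.Injective := Subtype.val_injective.comp S.equivFin.symm.injective
  have hrange : Set.range ι = S := by
    rw [Set.range_comp, Equiv.range_eq_univ, Set.image_univ, Subtype.range_coe]
  obtain ⟨a₀, ha₀⟩ : v₀ ∈ Set.range ι := hrange ▸ exPos_mem_visited v₀ _ (Nat.zero_le _)
  have hvalid := valid_inducedPatch_of_range_eq_visited hwf hconn h3 hι hrange
    (hlt.trans_le (min_le_right _ _)) ha₀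
  obtain ⟨c, hc, -⟩ := exists_run_inducedPatch_take hwf h3 hι w ha₀ hrange.symm.subset le_rfl
  rw [List.take_length, hw _ (hlt.trans_le (min_le_left _ _)) _ hvalid a₀] at hc
  cases hc

end Visited

end PGraph

/-- Offset `0` leads back through the edge just traversed, and offset `2 * e % 3 ≡ -e` undoes
offset `e`, so `w ++ retrace w` returns to its start. -/
def retrace : List ℕ → List ℕ
  | [] => []
  | _ :: rest => 0 :: rest.reverse.map fun e => 2 * e % 3

lemma length_retrace (w : List ℕ) : (retrace w).length = w.length := by
  cases w <;> simp [retrace]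

lemma lt_three_of_mem_retrace {w : List ℕ} {e : ℕ} (he : e ∈ retrace w) : e < 3 := by
  cases w <;> simp only [retrace, List.not_mem_nil, List.mem_cons, List.mem_map] at he
  obtain rfl | ⟨_, -, rfl⟩ := he <;> omega

namespace PGraph

variable {G : PGraph V}

lemma exStep_snd_lt (hwf : G.Wf) (h3 : ∀ v, G.deg v = 3) (c : V × ℕ) (e : ℕ) :
    (exStep G c e).2 < 3 := by
  simpa [exStep, h3] using back_lt_three hwf h3 c.1 (Nat.mod_lt (c.2 + e) three_pos)

lemma exStep_exStep_of_mod_eq (hwf : G.Wf) (h3 : ∀ v, G.deg v = 3) (c : V × ℕ) (e l e' : ℕ)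
    (h : (l + e') % 3 = (exStep G c e).2) :
    exStep G ((exStep G c e).1, l) e' = (c.1, (c.2 + e) % 3) := by
  have hp : (c.2 + e) % 3 < G.deg c.1 := by rw [h3]; omega
  simp only [exStep, h3] at h ⊢
  rw [h, hwf.2.2.1 _ _ (h3 c.1 ▸ hp), hwf.2.2.2.1 _ _ (h3 c.1 ▸ hp)]

lemma foldl_append_retrace (hwf : G.Wf) (h3 : ∀ v, G.deg v = 3) :
    ∀ (rest : List ℕ) (e : ℕ) (c : V × ℕ),
      ((e :: rest) ++ retrace (e :: rest)).foldl (exStep G) c = (c.1, (c.2 + e) % 3)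
  | [], e, c => by
    have := exStep_snd_lt hwf h3 c e
    exact exStep_exStep_of_mod_eq hwf h3 c e (exStep G c e).2 0 (by omega)
  | h :: t, e, c => by
    have hsplit : (e :: h :: t) ++ retrace (e :: h :: t) =
        e :: ((h :: t) ++ retrace (h :: t) ++ [2 * h % 3]) := by
      simp [retrace]
    have := exStep_snd_lt hwf h3 c e
    rw [hsplit, List.foldl_cons, List.foldl_append, foldl_append_retrace hwf h3 t h,
      List.foldl_cons, List.foldl_nil]
    exact exStep_exStep_of_mod_eq hwf h3 c e _ _ (by omega)

lemma exPos_append_retrace (hwf : G.Wf) (h3 : ∀ v, G.deg v = 3) (v₀ : V) (w : List ℕ) :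
    exPos G v₀ (w ++ retrace w) (w ++ retrace w).length = v₀ := by
  cases w with
  | nil => rfl
  | cons e rest => rw [exPos, List.take_length, foldl_append_retrace hwf h3]

end PGraph

/-- There is a constant `C` such that for every `z` there is an
exploration sequence `w ∈ {0,1,2}*` of length at most `z ^ C` such that in every
connected 3-regular graph `G` on `n` vertices, from every starting vertex, an
agent following `w` visits at least `min z n` distinct vertices and returns to
its starting vertex (the walk is closed). -/
theorem short_uxs_three_regular :
    ∃ C : ℕ, 0 < C ∧ ∀ z : ℕ, ∃ w : List ℕ,
      (∀ e ∈ w, e < 3) ∧ w.length ≤ z ^ C ∧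
      ∀ (n : ℕ) (G : PGraph (Fin n)), 0 < n → G.Wf → G.Conn →
        (∀ v, G.deg v = 3) → ∀ v0 : Fin n,
          min z n ≤ ((Finset.range (w.length + 1)).image (fun j => exPos G v0 w j)).card ∧
          exPos G v0 w w.length = v0 := by
  refine ⟨15, by norm_num, fun z => ?_⟩
  rcases Nat.lt_or_ge z 2 with hz | hz
  · refine ⟨[], by simp, by simp, fun n G _ _ _ _ v₀ => ⟨?_, rfl⟩⟩
    exact (min_le_left _ _).trans (Nat.le_of_lt_succ hz |>.trans
      (Finset.card_pos.2 ⟨v₀, PGraph.exPos_mem_visited v₀ [] le_rfl⟩))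
  obtain ⟨σ, hσ⟩ := Patch.exists_word_forall_valid_run_eq_none
    (mul_decayRate_pow_wordLength_lt (by omega : 1 ≤ z))
  set w := (List.ofFn σ).map Fin.val
  refine ⟨w ++ retrace w, fun e he => ?_, ?_,
    fun n G _ hwf hconn h3 v₀ => ⟨?_, PGraph.exPos_append_retrace hwf h3 v₀ w⟩⟩
  · rcases List.mem_append.1 he with he | he
    · obtain ⟨a, -, rfl⟩ := List.mem_map.1 he
      exact a.isLt
    · exact lt_three_of_mem_retrace he
  · rw [List.length_append, length_retrace, ← two_mul]
    simpa [w] using two_mul_wordLength_le hz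
  · show min z n ≤ #(G.visited v₀ (w ++ retrace w))
    calc min z n = min z (Fintype.card (Fin n)) := by rw [Fintype.card_fin]
      _ ≤ #(G.visited v₀ w) := PGraph.min_le_card_visited hwf hconn h3 hσ v₀
      _ ≤ _ := Finset.card_le_card (PGraph.visited_subset_append v₀ w (retrace w))
end
end

section
/- There is an absolute constant C such that for every z ∈ ℕ there exists a finite sequence w ∈ {−1,0,1}* of length at most z^C with the following properties for every connected graph G on n vertices and every starting vertex: (1) an agent following w in G visits at least min{z, n} distinct vertices; (2) following w yields a closed walk in G (the agent ends at its starting vertex). (In the paper, w is produced by a deterministic O(log z)-space algorithm.) -/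
noncomputable section
open scoped Classical

variable {V : Type}

/-- One step of an agent following an exploration sequence with integer offsets:
at the pair (current vertex, port of the edge back to the previous vertex) and
offset `e`, the agent leaves through the port `(lab + e) mod deg`. -/
def exStepZ (G : PGraph V) (c : V × ℕ) (e : ℤ) : V × ℕ :=
  let i := (((c.2 : ℤ) + e) % (G.deg c.1 : ℤ)).toNat
  (G.nbr c.1 i, G.back c.1 i)

/-- Position of an agent starting at `v0` after following the first `j` offsets
of the exploration sequence `w` (initially the back-port is `0`). -/
def exPosZ (G : PGraph V) (v0 : V) (w : List ℤ) (j : ℕ) : V :=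
  ((w.take j).foldl (exStepZ G) (v0, 0)).1

/-!
Reading the letters `0, 1, 2` as the offsets `-1, 0, 1`, the agent moves on the states
(vertex, back port) of a port-labelled graph by three injective maps, so it suffices to find one
word that explores every partial system of three injections.

For systems of three permutations of an `N`-element set, Kac's return-time formula bounds the
expected time to return to a point by `N`; hopping along a shortest path, a random walk then hits
any point reachable from its start within `O(N³)` steps with probability at least `7/8`. Hence
`O(N²)` such rounds all fail with probability `8^{-O(N²)}`, less than one over the number of
systems, and a single word of length `O(N⁵)` works for all of them.

Take `N = 2 z²`. If the agent saw fewer than `min z n` vertices along such a word, it used at most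
`z²` states. Completing the transitions it used to permutations of `N` points, with all other
transitions at its states leading away from them, gives a system in which the word never leaves
the image of the agent's walk, although connectivity of the graph makes some point outside it
reachable. Finally, the offsets `0, -eₜ, …, -e₂` retrace a walk `e₁, …, eₜ` back to its start.
-/

open Finset Equiv

section Reachability

variable {ι T : Type*}

def Reaches (F : ι → T → T) : T → T → Prop :=
  Relation.ReflTransGen fun x y => ∃ e, F e x = y

def trace (F : ι → T → T) (d : T) (f : List ι) : List T :=
  f.scanl (fun x e => F e x) d

@[simp] lemma trace_nil (F : ι → T → T) (d : T) : trace F d [] = [d] := rfl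

@[simp] lemma trace_cons (F : ι → T → T) (d : T) (e : ι) (f : List ι) :
    trace F d (e :: f) = d :: trace F (F e d) f :=
  List.scanl_cons

def IsWalk (F : ι → T → T) (p : ℕ → T) (m : ℕ) : Prop :=
  ∀ i < m, ∃ e, F e (p i) = p (i + 1)

lemma IsWalk.mono {F : ι → T → T} {p : ℕ → T} {m m' : ℕ} (h : IsWalk F p m) (hm : m' ≤ m) :
    IsWalk F p m' :=
  fun i hi => h i (hi.trans_le hm)

lemma Reaches.exists_isWalk_injOn {F : ι → T → T} {x y : T} (h : Reaches F x y) :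
    ∃ m p, p 0 = x ∧ p m = y ∧ IsWalk F p m ∧ Set.InjOn p (Set.Iic m) := by
  induction h with
  | refl =>
    refine ⟨0, fun _ => x, rfl, rfl, fun i hi => absurd hi (Nat.not_lt_zero _), ?_⟩
    intro i hi j hj _
    simp_all
  | @tail z y _ hzy ih =>
    obtain ⟨m, p, hp0, hpm, hwalk, hinj⟩ := ih
    by_cases hy : ∃ i ≤ m, p i = y
    · obtain ⟨i, hi, hpi⟩ := hy
      exact ⟨i, p, hp0, hpi, hwalk.mono hi, hinj.mono (Set.Iic_subset_Iic.mpr hi)⟩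
    push Not at hy
    refine ⟨m + 1, fun t => if t ≤ m then p t else y, by simpa using hp0, by simp, ?_, ?_⟩
    · intro i hi
      rcases Nat.lt_succ_iff_lt_or_eq.mp hi with hi | rfl
      · simpa [hi.le, Nat.succ_le_of_lt hi] using hwalk i hi
      · simpa [hpm] using hzy
    · intro i hi j hj hij
      simp only [Set.mem_Iic] at hi hj
      by_cases hi' : i ≤ m <;> by_cases hj' : j ≤ m <;>
        simp only [hi', hj', if_true, if_false] at hij
      · exact hinj hi' hj' hij
      · exact absurd hij (hy i hi')
      · exact absurd hij.symm (hy j hj')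
      · omega

end Reachability

section Permutations

variable {ι S : Type*} (σ : ι → Perm S)

lemma reaches_pow_apply (e : ι) (x : S) :
    ∀ k : ℕ, Reaches (fun e => σ e) x ((σ e ^ k) x)
  | 0 => Relation.ReflTransGen.refl
  | k + 1 => by
    rw [pow_succ', Perm.mul_apply]
    exact (reaches_pow_apply e x k).tail ⟨e, rfl⟩

lemma Reaches.symm_of_perm [Finite S] {x y : S} (h : Reaches (fun e => σ e) x y) :
    Reaches (fun e => σ e) y x := by
  induction h with
  | refl => exact Relation.ReflTransGen.refl
  | @tail a c _ hac ih =>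
    obtain ⟨e, rfl⟩ := hac
    obtain ⟨k, -, hk⟩ :=
      (Perm.sameCycle_apply_left.mpr (Perm.SameCycle.refl (σ e) a)).exists_pow_eq'
    exact (hk ▸ reaches_pow_apply σ e (σ e a) k).trans ih

end Permutations

section Counting

variable {ι S : Type*} [Fintype ι] (σ : ι → Perm S) (b : S)

/-- The number of words of length `k` whose walk from `d` avoids `b` at all times `0, …, k`. -/
def avoidCount : ℕ → S → ℕ
  | 0, d => if d = b then 0 else 1
  | k + 1, d => if d = b then 0 else ∑ e, avoidCount k (σ e d)

/-- The number of words of length `k` whose walk from `d` avoids `b` at the times `1, …, k`. -/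
def escapeCount : ℕ → S → ℕ
  | 0, _ => 1
  | k + 1, d => ∑ e, avoidCount σ b k (σ e d)

lemma avoidCount_eq_ite (k : ℕ) (d : S) :
    avoidCount σ b k d = if d = b then 0 else escapeCount σ b k d := by
  cases k <;> rfl

@[simp] lemma avoidCount_self (k : ℕ) : avoidCount σ b k b = 0 := by
  simp [avoidCount_eq_ite]

lemma avoidCount_le_escapeCount (k : ℕ) (d : S) :
    avoidCount σ b k d ≤ escapeCount σ b k d := by
  rw [avoidCount_eq_ite]
  split_ifs <;> simp

lemma escapeCount_le_pow : ∀ (k : ℕ) (d : S), escapeCount σ b k d ≤ Fintype.card ι ^ k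
  | 0, _ => by simp [escapeCount]
  | k + 1, d => by
    calc escapeCount σ b (k + 1) d ≤ ∑ _e : ι, Fintype.card ι ^ k :=
          sum_le_sum fun e _ =>
            (avoidCount_le_escapeCount σ b k _).trans (escapeCount_le_pow k _)
      _ = Fintype.card ι ^ (k + 1) := by simp [pow_succ, mul_comm]

lemma escapeCount_add_le (j : ℕ) :
    ∀ (k : ℕ) (d : S), escapeCount σ b (j + k) d ≤ Fintype.card ι ^ j * escapeCount σ b k d
  | 0, d => by simpa [escapeCount] using escapeCount_le_pow σ b j d
  | k + 1, d => by
    rw [← add_assoc, escapeCount, escapeCount, mul_sum]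
    refine sum_le_sum fun e _ => ?_
    rw [avoidCount_eq_ite, avoidCount_eq_ite]
    split_ifs
    · simp
    · exact escapeCount_add_le j k _

lemma sum_escapeCount_eq [Fintype S] (k : ℕ) :
    ∑ d, escapeCount σ b k d = ∑ d, avoidCount σ b k d + escapeCount σ b k b := by
  have h (d : S) :
      escapeCount σ b k d = avoidCount σ b k d + if d = b then escapeCount σ b k b else 0 := by
    rw [avoidCount_eq_ite]
    split_ifs with hd <;> simp [hd]
  rw [sum_congr rfl fun d _ => h d, sum_add_distrib, sum_ite_eq']
  simp

/-- Each `σ e` preserves the counting measure on `S`. -/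
lemma sum_escapeCount_succ [Fintype S] (k : ℕ) :
    ∑ d, escapeCount σ b (k + 1) d = Fintype.card ι * ∑ d, avoidCount σ b k d := by
  simp only [escapeCount]
  rw [sum_comm]
  simp [Equiv.sum_comp]

/-- Kac's identity, counted: summing over the starting point, a word of length `L` either
avoids `b` throughout, or it has a last visit to `b`, at some time `k`. -/
lemma sum_avoidCount_add_sum_escapeCount [Fintype S] (L : ℕ) :
    ∑ d, avoidCount σ b L d +
        ∑ k ∈ range (L + 1), Fintype.card ι ^ k * escapeCount σ b (L - k) b =
      Fintype.card S * Fintype.card ι ^ L := by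
  induction L with
  | zero => simpa [escapeCount] using (sum_escapeCount_eq σ b 0).symm
  | succ L ih =>
    rw [sum_range_succ', pow_zero, one_mul, Nat.sub_zero, ← add_assoc, add_right_comm,
      ← sum_escapeCount_eq, sum_escapeCount_succ]
    simp only [pow_succ', mul_assoc, ← mul_sum, Nat.add_sub_add_right, ← mul_add, ih]
    ring

lemma succ_mul_escapeCount_self_le [Fintype S] (L : ℕ) :
    (L + 1) * escapeCount σ b L b ≤ Fintype.card S * Fintype.card ι ^ L := by
  rw [← sum_avoidCount_add_sum_escapeCount σ b L]
  calc (L + 1) * escapeCount σ b L b = ∑ _k ∈ range (L + 1), escapeCount σ b L b := by simp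
    _ ≤ ∑ k ∈ range (L + 1), Fintype.card ι ^ k * escapeCount σ b (L - k) b := by
        refine sum_le_sum fun k hk => ?_
        have hkL : k + (L - k) = L := by grind
        simpa [hkL] using escapeCount_add_le σ b k (L - k) b
    _ ≤ _ := Nat.le_add_left _ _

end Counting

section Hitting

variable {ι S : Type*} [Fintype ι] (σ : ι → Perm S) (b : S)

lemma escapeCount_neighbor_le [Fintype S] {x : S} {e : ι} (hx : σ e x ≠ x) (L : ℕ) :
    (L + 2) * escapeCount σ x L (σ e x) ≤ Fintype.card S * Fintype.card ι ^ (L + 1) := by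
  have hstep : escapeCount σ x L (σ e x) ≤ escapeCount σ x (L + 1) x := by
    have hx' : avoidCount σ x L (σ e x) = escapeCount σ x L (σ e x) := by
      rw [avoidCount_eq_ite, if_neg hx]
    rw [← hx', escapeCount]
    exact single_le_sum (f := fun e => avoidCount σ x L (σ e x)) (by simp) (mem_univ e)
  exact (Nat.mul_le_mul_left _ hstep).trans (succ_mul_escapeCount_self_le σ x (L + 1))

/-- A word of length `L₁ + L₂` avoiding `b` either avoids `s` during its first `L₁` steps,
or it visits `s` at some time `k ≤ L₁`, after which `L₂` of the remaining steps avoid `b`. -/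
lemma escapeCount_add_le_of_avoid (s : S) :
    ∀ (L₁ L₂ : ℕ) (d : S), escapeCount σ b (L₁ + L₂) d ≤
      avoidCount σ s L₁ d * Fintype.card ι ^ L₂ +
        Fintype.card ι ^ L₁ * escapeCount σ b L₂ s := by
  intro L₁ L₂ d
  by_cases hd : d = s
  · subst hd
    exact (escapeCount_add_le σ b L₁ L₂ d).trans (Nat.le_add_left _ _)
  induction L₁ generalizing d with
  | zero =>
    simpa [avoidCount, hd] using
      (escapeCount_le_pow σ b L₂ d).trans (Nat.le_add_right _ (escapeCount σ b L₂ s))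
  | succ L₁ ih =>
    calc escapeCount σ b (L₁ + 1 + L₂) d = ∑ e, avoidCount σ b (L₁ + L₂) (σ e d) := by
          rw [add_right_comm]; rfl
      _ ≤ ∑ e, (avoidCount σ s L₁ (σ e d) * Fintype.card ι ^ L₂ +
            Fintype.card ι ^ L₁ * escapeCount σ b L₂ s) := by
          refine sum_le_sum fun e _ => (avoidCount_le_escapeCount σ b _ _).trans ?_
          by_cases he : σ e d = s
          · rw [he]
            exact (escapeCount_add_le σ b L₁ L₂ s).trans (Nat.le_add_left _ _)
          · exact ih _ he
      _ = _ := by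
          rw [avoidCount, if_neg hd, sum_add_distrib, sum_mul, sum_const, card_univ, smul_eq_mul]
          ring

/-- From `p (i + 1) = σ e (p i)` the walk soon hits `p i`, by Kac's formula at `p i`; chaining
these hops along `p` leads to `b = p 0`. -/
lemma succ_mul_escapeCount_le_of_isWalk [Fintype S] (L : ℕ) :
    ∀ (ρ : ℕ) (p : ℕ → S), p 0 = b → IsWalk (fun e => σ e) p (ρ + 1) →
      (∀ i ≤ ρ, p (i + 1) ≠ p i) →
      (L + 2) * escapeCount σ b ((ρ + 1) * L) (p (ρ + 1)) ≤
        (ρ + 1) * Fintype.card S * Fintype.card ι ^ ((ρ + 1) * L + 1)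
  | 0, p, hp0, hwalk, hne => by
    obtain ⟨e, he : σ e (p 0) = p 1⟩ := hwalk 0 one_pos
    have := escapeCount_neighbor_le σ (x := b) (e := e)
      (by rw [← hp0, he]; exact hne 0 le_rfl) L
    simpa [← he, hp0] using this
  | ρ + 1, p, hp0, hwalk, hne => by
    obtain ⟨e, he : σ e (p (ρ + 1)) = p (ρ + 2)⟩ := hwalk (ρ + 1) (by omega)
    have hhop := escapeCount_neighbor_le σ (x := p (ρ + 1)) (e := e)
      (by rw [he]; exact hne (ρ + 1) le_rfl) L
    rw [he] at hhop
    have ih := succ_mul_escapeCount_le_of_isWalk L ρ p hp0 (hwalk.mono (by omega))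
      (fun i hi => hne i (by omega))
    have hsplit := escapeCount_add_le_of_avoid σ b (p (ρ + 1)) L ((ρ + 1) * L) (p (ρ + 2))
    rw [show (ρ + 1 + 1) * L = L + (ρ + 1) * L by ring]
    calc (L + 2) * escapeCount σ b (L + (ρ + 1) * L) (p (ρ + 2))
        ≤ (L + 2) * (escapeCount σ (p (ρ + 1)) L (p (ρ + 2)) *
            Fintype.card ι ^ ((ρ + 1) * L) +
          Fintype.card ι ^ L * escapeCount σ b ((ρ + 1) * L) (p (ρ + 1))) :=
          Nat.mul_le_mul_left _ (hsplit.trans (by gcongr; exact avoidCount_le_escapeCount ..))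
      _ = (L + 2) * escapeCount σ (p (ρ + 1)) L (p (ρ + 2)) * Fintype.card ι ^ ((ρ + 1) * L) +
          Fintype.card ι ^ L * ((L + 2) * escapeCount σ b ((ρ + 1) * L) (p (ρ + 1))) := by
          ring
      _ ≤ Fintype.card S * Fintype.card ι ^ (L + 1) * Fintype.card ι ^ ((ρ + 1) * L) +
          Fintype.card ι ^ L *
            ((ρ + 1) * Fintype.card S * Fintype.card ι ^ ((ρ + 1) * L + 1)) := by gcongr
      _ = (ρ + 1 + 1) * Fintype.card S * Fintype.card ι ^ (L + (ρ + 1) * L + 1) := by ring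

lemma eight_mul_escapeCount_le [Fintype S] {d : S} (hd : d ≠ b)
    (h : Reaches (fun e => σ e) b d) {L W : ℕ} (hL : 8 * Fintype.card ι * Fintype.card S ^ 2 ≤ L)
    (hW : Fintype.card S * L ≤ W) :
    8 * escapeCount σ b W d ≤ Fintype.card ι ^ W := by
  obtain ⟨m, p, hp0, hpm, hwalk, hinj⟩ := h.exists_isWalk_injOn
  have hm : m + 1 ≤ Fintype.card S := by
    simpa using card_le_card_of_injOn p (s := range (m + 1)) (t := univ) (by simp)
      (hinj.mono fun i hi => by simp only [coe_range, Set.mem_Iio, Set.mem_Iic] at hi ⊢; omega)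
  obtain ⟨ρ, rfl⟩ : ∃ ρ, m = ρ + 1 := Nat.exists_eq_succ_of_ne_zero (by rintro rfl; simp_all)
  have hne : ∀ i ≤ ρ, p (i + 1) ≠ p i := fun i hi heq =>
    absurd (hinj (by rw [Set.mem_Iic]; omega) (by rw [Set.mem_Iic]; omega) heq) (by omega)
  have hwalkBound := succ_mul_escapeCount_le_of_isWalk σ b L ρ p hp0 hwalk hne
  rw [hpm] at hwalkBound
  have hcoef : 8 * ((ρ + 1) * Fintype.card S * Fintype.card ι) ≤ L + 2 := by
    nlinarith [Nat.mul_le_mul_right (Fintype.card S * Fintype.card ι) (hm.trans' le_self_add)]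
  have hfirst : 8 * escapeCount σ b ((ρ + 1) * L) d ≤ Fintype.card ι ^ ((ρ + 1) * L) := by
    refine Nat.le_of_mul_le_mul_left ?_ (show 0 < L + 2 by omega)
    calc (L + 2) * (8 * escapeCount σ b ((ρ + 1) * L) d)
        ≤ 8 * ((ρ + 1) * Fintype.card S * Fintype.card ι ^ ((ρ + 1) * L + 1)) := by
          linarith
      _ = 8 * ((ρ + 1) * Fintype.card S * Fintype.card ι) * Fintype.card ι ^ ((ρ + 1) * L) := by
          ring
      _ ≤ (L + 2) * Fintype.card ι ^ ((ρ + 1) * L) := Nat.mul_le_mul_right _ hcoef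
  have hρW : (ρ + 1) * L ≤ W := (Nat.mul_le_mul_right L (hm.trans' le_self_add)).trans hW
  obtain ⟨j, rfl⟩ := Nat.exists_eq_add_of_le' hρW
  calc 8 * escapeCount σ b (j + (ρ + 1) * L) d
      ≤ Fintype.card ι ^ j * (8 * escapeCount σ b ((ρ + 1) * L) d) := by
        linarith [escapeCount_add_le σ b j ((ρ + 1) * L) d]
    _ ≤ Fintype.card ι ^ (j + (ρ + 1) * L) := by
        rw [pow_add]; exact Nat.mul_le_mul_left _ hfirst

/-- The Markov property of the walk, in counting form. -/
lemma mul_avoidCount_add_le {C : Set S} (hC : ∀ e, ∀ x ∈ C, σ e x ∈ C) {a B k : ℕ}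
    (hB : ∀ x ∈ C, a * avoidCount σ b k x ≤ B) :
    ∀ (j : ℕ), ∀ d ∈ C, a * avoidCount σ b (j + k) d ≤ avoidCount σ b j d * B := by
  intro j
  induction j with
  | zero =>
    intro d hd
    by_cases hdb : d = b
    · simp [hdb]
    · simpa [avoidCount, hdb] using hB d hd
  | succ j ih =>
    intro d hd
    by_cases hdb : d = b
    · simp [hdb]
    rw [add_right_comm, avoidCount, avoidCount, if_neg hdb, if_neg hdb, mul_sum, sum_mul]
    exact sum_le_sum fun e _ => ih _ (hC e d hd)

lemma pow_mul_avoidCount_le [Fintype S] {d₀ : S} (h : Reaches (fun e => σ e) d₀ b) {L W : ℕ}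
    (hL : 8 * Fintype.card ι * Fintype.card S ^ 2 ≤ L) (hW : Fintype.card S * L ≤ W) (K : ℕ) :
    8 ^ K * avoidCount σ b (K * W) d₀ ≤ Fintype.card ι ^ (K * W) := by
  have hwindow : ∀ x ∈ {x | Reaches (fun e => σ e) d₀ x},
      8 * avoidCount σ b W x ≤ Fintype.card ι ^ W := by
    intro x hx
    by_cases hxb : x = b
    · simp [hxb]
    exact (Nat.mul_le_mul_left 8 (avoidCount_le_escapeCount σ b W x)).trans
      (eight_mul_escapeCount_le σ b hxb ((h.symm_of_perm σ).trans hx) hL hW)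
  have hsplit := mul_avoidCount_add_le σ b (fun e x hx => hx.tail ⟨e, rfl⟩) hwindow
  induction K with
  | zero =>
    rw [zero_mul, pow_zero, one_mul, avoidCount]
    split_ifs <;> simp
  | succ K ih =>
    calc 8 ^ (K + 1) * avoidCount σ b ((K + 1) * W) d₀
        = 8 ^ K * (8 * avoidCount σ b (K * W + W) d₀) := by rw [add_one_mul]; ring
      _ ≤ 8 ^ K * avoidCount σ b (K * W) d₀ * Fintype.card ι ^ W := by
        rw [mul_assoc]
        exact Nat.mul_le_mul_left _ (hsplit (K * W) d₀ Relation.ReflTransGen.refl)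
      _ ≤ Fintype.card ι ^ ((K + 1) * W) := by
        rw [add_one_mul, pow_add]
        exact Nat.mul_le_mul_right _ ih

end Hitting

section Universal

variable {ι S : Type*} [Fintype ι]

/-- The union bound, derandomized: choosing the letters one at a time, keep the number of failing
continuations below the number of all continuations. -/
lemma exists_word_mem_trace {I : Type*} [Fintype I] (σ : I → ι → Perm S) (b d : I → S) (k : ℕ)
    (h : ∑ i, avoidCount (σ i) (b i) k (d i) < Fintype.card ι ^ k) :
    ∃ f : List ι, f.length = k ∧ ∀ i, b i ∈ trace (fun e => σ i e) (d i) f := by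
  induction k generalizing d with
  | zero =>
    refine ⟨[], rfl, fun i => ?_⟩
    have hi := (single_le_sum (fun i _ => Nat.zero_le _) (mem_univ i)).trans_lt h
    have hdb : d i = b i := by
      by_contra hne
      simp [avoidCount, hne] at hi
    simp [hdb]
  | succ k ih =>
    let d' (e : ι) (i : I) : S := if d i = b i then b i else σ i e (d i)
    have hsum : ∑ e, ∑ i, avoidCount (σ i) (b i) k (d' e i) =
        ∑ i, avoidCount (σ i) (b i) (k + 1) (d i) := by
      rw [sum_comm]
      refine sum_congr rfl fun i _ => ?_
      by_cases hi : d i = b i <;> simp [d', hi, avoidCount]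
    obtain ⟨e, -, he⟩ :
        ∃ e ∈ univ, ∑ i, avoidCount (σ i) (b i) k (d' e i) < Fintype.card ι ^ k := by
      refine exists_lt_of_sum_lt ?_
      simpa [hsum, pow_succ, mul_comm] using h
    obtain ⟨f, hf, hvisit⟩ := ih (d' e) he
    refine ⟨e :: f, by simp [hf], fun i => ?_⟩
    by_cases hi : d i = b i
    · simp [hi]
    · rw [trace_cons]
      exact List.mem_cons_of_mem _ (by simpa [d', hi] using hvisit i)

lemma card_systems_lt (S : Type*) [Fintype S] :
    Fintype.card ((ι → Perm S) × S × S) <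
      8 ^ (Fintype.card S * (Fintype.card ι * Fintype.card S + 2)) := by
  set N := Fintype.card S
  calc Fintype.card ((ι → Perm S) × S × S) = N.factorial ^ Fintype.card ι * N ^ 2 := by
        simp [Fintype.card_perm, N, sq]
    _ ≤ (N ^ N) ^ Fintype.card ι * N ^ 2 := by gcongr; exact Nat.factorial_le_pow N
    _ = N ^ (N * Fintype.card ι + 2) := by ring
    _ < (2 ^ N) ^ (N * Fintype.card ι + 2) := Nat.pow_lt_pow_left N.lt_two_pow_self (by omega)
    _ = 2 ^ (N * (Fintype.card ι * N + 2)) := by rw [← pow_mul]; ring_nf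
    _ ≤ 8 ^ (N * (Fintype.card ι * N + 2)) := Nat.pow_le_pow_left (by norm_num) _

theorem exists_universal_word (S : Type*) [Fintype S] :
    ∃ f : List ι, f.length =
        8 * Fintype.card ι * Fintype.card S ^ 4 * (Fintype.card ι * Fintype.card S + 2) ∧
      ∀ (σ : ι → Perm S) (d b : S), Reaches (fun e => σ e) d b →
        b ∈ trace (fun e => σ e) d f := by
  set N := Fintype.card S
  set q := Fintype.card ι
  set K := N * (q * N + 2)
  set W := N * (8 * q * N ^ 2)
  let I := {x : (ι → Perm S) × S × S // Reaches (fun e => x.1 e) x.2.1 x.2.2}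
  have hpos : 0 < q ^ (K * W) := by
    rcases Nat.eq_zero_or_pos q with hq | hq
    · simp [W, hq]
    · positivity
  have hbound :
      8 ^ K * ∑ i : I, avoidCount i.1.1 i.1.2.2 (K * W) i.1.2.1 < 8 ^ K * q ^ (K * W) :=
    calc 8 ^ K * ∑ i : I, avoidCount i.1.1 i.1.2.2 (K * W) i.1.2.1
        ≤ ∑ _i : I, q ^ (K * W) := by
          rw [mul_sum]
          exact sum_le_sum fun i _ => pow_mul_avoidCount_le _ _ i.2 le_rfl le_rfl K
      _ = Fintype.card I * q ^ (K * W) := by simp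
      _ < 8 ^ K * q ^ (K * W) :=
          Nat.mul_lt_mul_of_pos_right ((Fintype.card_subtype_le _).trans_lt (card_systems_lt S))
            hpos
  obtain ⟨f, hf, hvisit⟩ := exists_word_mem_trace (fun i : I => i.1.1) (fun i => i.1.2.2)
    (fun i => i.1.2.1) (K * W) (Nat.lt_of_mul_lt_mul_left hbound)
  exact ⟨f, by rw [hf]; ring, fun σ d b h => hvisit ⟨(σ, d, b), h⟩⟩

end Universal

section Simulation

lemma Equiv.Perm.exists_eqOn_of_injOn {S : Type*} [Fintype S] {K A : Finset S} {g : S → S}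
    (hAK : A ⊆ K) (hg : Set.MapsTo g A K) (hinj : Set.InjOn g A)
    (hK : 2 * #K ≤ Fintype.card S) :
    ∃ π : Perm S, Set.EqOn π g A ∧ ∀ x ∈ K, x ∉ A → π x ∉ K := by
  obtain ⟨j⟩ : Nonempty (↥(K \ A) ↪ ↥Kᶜ) := by
    refine Function.Embedding.nonempty_of_card_le ?_
    simp only [Fintype.card_coe, card_compl]
    have := card_le_card (sdiff_subset (s := K) (t := A))
    omega
  let h : S → S := fun x => if hx : x ∈ K \ A then j ⟨x, hx⟩ else g x
  have h_of_mem {x} (hx : x ∈ A) : h x = g x := by simp [h, hx]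
  have h_not_mem {x} (hxK : x ∈ K) (hxA : x ∉ A) : h x ∉ K := by
    simpa [h, hxK, hxA] using mem_compl.mp (j ⟨x, mem_sdiff.mpr ⟨hxK, hxA⟩⟩).2
  have hinjK : Set.InjOn h K := by
    intro x hx y hy hxy
    by_cases hxA : x ∈ A <;> by_cases hyA : y ∈ A
    · exact hinj hxA hyA (by rwa [h_of_mem hxA, h_of_mem hyA] at hxy)
    · exact absurd (hxy ▸ h_of_mem hxA ▸ hg hxA) (h_not_mem hy hyA)
    · exact absurd (hxy.symm ▸ h_of_mem hyA ▸ hg hyA) (h_not_mem hx hxA)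
    · have hx' : x ∈ K \ A := mem_sdiff.mpr ⟨hx, hxA⟩
      have hy' : y ∈ K \ A := mem_sdiff.mpr ⟨hy, hyA⟩
      simp only [h, dif_pos hx', dif_pos hy'] at hxy
      exact congrArg Subtype.val (j.injective (Subtype.ext hxy))
  obtain ⟨π, hπ⟩ := exists_equiv_extend_of_card_eq (t := univ) (by simp) (subset_univ _) hinjK
  refine ⟨π.trans (Equiv.subtypeUnivEquiv mem_univ), fun x hx => ?_, fun x hxK hxA => ?_⟩
  · simp [hπ x (hAK hx), h_of_mem hx]
  · simpa [hπ x hxK] using h_not_mem hxK hxA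

variable {ι T S : Type*}

lemma exists_perm_simulation [Fintype S] [Nonempty S] (F : ι → T → T) (D : Finset T)
    (hF : ∀ e, Set.InjOn (F e) D) (hD : 2 * #D ≤ Fintype.card S) :
    ∃ (κ : T → S) (π : ι → Perm S), (∀ e, ∀ s ∈ D, F e s ∈ D → π e (κ s) = κ (F e s)) ∧
      ∀ e, ∀ s ∈ D, F e s ∉ D → π e (κ s) ∉ D.image κ := by
  obtain ⟨j⟩ : Nonempty (↥D ↪ S) :=
    Function.Embedding.nonempty_of_card_le (by rw [Fintype.card_coe]; omega)
  let κ : T → S := fun s => if hs : s ∈ D then j ⟨s, hs⟩ else Classical.arbitrary S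
  have hκ : Set.InjOn κ D := fun x hx y hy hxy => by
    rw [mem_coe] at hx hy
    simpa [κ, hx, hy] using hxy
  let g (e : ι) (x : S) : S := if h : ∃ s ∈ D, κ s = x then κ (F e h.choose) else x
  have hg (e : ι) {s : T} (hs : s ∈ D) : g e (κ s) = κ (F e s) := by
    have h : ∃ s' ∈ D, κ s' = κ s := ⟨s, hs, rfl⟩
    simp only [g, dif_pos h, hκ h.choose_spec.1 hs h.choose_spec.2]
  have hext (e : ι) := Equiv.Perm.exists_eqOn_of_injOn
    (K := D.image κ) (A := (D.filter (F e · ∈ D)).image κ) (g := g e)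
    (image_subset_image (filter_subset _ _))
    (by
      intro x hx
      obtain ⟨s, hs, rfl⟩ := mem_image.mp hx
      rw [mem_filter] at hs
      simpa [hg e hs.1] using mem_image_of_mem κ hs.2)
    (by
      intro x hx y hy hxy
      obtain ⟨s, hs, rfl⟩ := mem_image.mp hx
      obtain ⟨s', hs', rfl⟩ := mem_image.mp hy
      rw [mem_filter] at hs hs'
      rw [hg e hs.1, hg e hs'.1] at hxy
      rw [hF e hs.1 hs'.1 (hκ hs.2 hs'.2 hxy)])
    ((Nat.mul_le_mul_left 2 card_image_le).trans hD)
  choose π hπ hπout using hext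
  refine ⟨κ, π, fun e s hs hFs => ?_, fun e s hs hFs => ?_⟩
  · rw [hπ e (mem_image_of_mem κ (mem_filter.mpr ⟨hs, hFs⟩)), hg e hs]
  · refine hπout e _ (mem_image_of_mem κ hs) fun hmem => hFs ?_
    obtain ⟨s', hs', hκs'⟩ := mem_image.mp hmem
    rw [mem_filter] at hs'
    exact hκ hs'.1 hs hκs' ▸ hs'.2

section

variable {F : ι → T → T} {D : Finset T} {κ : T → S} {π : ι → Perm S}
  (hsim : ∀ e, ∀ s ∈ D, F e s ∈ D → π e (κ s) = κ (F e s))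
include hsim

lemma trace_perm_eq_map_trace :
    ∀ (f : List ι) (s₀ : T), (∀ s ∈ trace F s₀ f, s ∈ D) →
      trace (fun e => π e) (κ s₀) f = (trace F s₀ f).map κ
  | [], _, _ => rfl
  | e :: f, s₀, hD => by
    simp only [trace_cons, List.mem_cons, forall_eq_or_imp] at hD ⊢
    rw [hsim e s₀ hD.1 (hD.2 _ (by cases f <;> simp)), trace_perm_eq_map_trace f _ hD.2]
    rfl

lemma Reaches.mem_of_simulation (hesc : ∀ e, ∀ s ∈ D, F e s ∉ D → π e (κ s) ∉ D.image κ)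
    {s₀ t : T} (hs₀ : s₀ ∈ D) (h : Reaches F s₀ t)
    (hπ : ∀ x, Reaches (fun e => π e) (κ s₀) x → x ∈ D.image κ) : t ∈ D := by
  suffices t ∈ D ∧ Reaches (fun e => π e) (κ s₀) (κ t) from this.1
  induction h with
  | refl => exact ⟨hs₀, Relation.ReflTransGen.refl⟩
  | @tail s s' _ hss' ih =>
    obtain ⟨e, rfl⟩ := hss'
    by_cases hFs : F e s ∈ D
    · exact ⟨hFs, ih.2.tail ⟨e, hsim e s ih.1 hFs⟩⟩
    · exact absurd (hπ _ (ih.2.tail ⟨e, rfl⟩)) (hesc e s ih.1 hFs)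

end

theorem Reaches.mem_of_universal [Fintype S] {f : List ι}
    (huniv : ∀ (σ : ι → Perm S) (d b : S), Reaches (fun e => σ e) d b →
      b ∈ trace (fun e => σ e) d f)
    {F : ι → T → T} {D : Finset T} (hF : ∀ e, Set.InjOn (F e) D) (hD : 2 * #D ≤ Fintype.card S)
    {s₀ t : T} (htrace : ∀ s ∈ trace F s₀ f, s ∈ D) (ht : Reaches F s₀ t) : t ∈ D := by
  have hs₀ : s₀ ∈ D := htrace s₀ (by cases f <;> simp)
  have : Nonempty S := Fintype.card_pos_iff.mp (by have := card_pos.mpr ⟨s₀, hs₀⟩; omega)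
  obtain ⟨κ, π, hsim, hesc⟩ := exists_perm_simulation F D hF hD
  refine ht.mem_of_simulation hsim hesc hs₀ fun x hx => ?_
  have hmem := huniv π (κ s₀) x hx
  rw [trace_perm_eq_map_trace hsim f s₀ htrace] at hmem
  obtain ⟨s, hs, rfl⟩ := List.mem_map.mp hmem
  exact mem_image_of_mem κ (htrace s hs)

end Simulation

section Agent

variable (G : PGraph V)

def exitPort (c : V × ℕ) (e : ℤ) : ℕ := (((c.2 : ℤ) + e) % (G.deg c.1 : ℤ)).toNat

lemma exStepZ_eq (c : V × ℕ) (e : ℤ) :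
    exStepZ G c e = (G.nbr c.1 (exitPort G c e), G.back c.1 (exitPort G c e)) := rfl

def IsState (c : V × ℕ) : Prop := c.2 < G.deg c.1

variable {G}

lemma exitPort_lt (hG : G.Wf) (c : V × ℕ) (e : ℤ) : exitPort G c e < G.deg c.1 := by
  have hpos : (0 : ℤ) < G.deg c.1 := by exact_mod_cast hG.1 c.1
  have h₁ := Int.emod_nonneg ((c.2 : ℤ) + e) hpos.ne'
  have h₂ := Int.emod_lt_of_pos ((c.2 : ℤ) + e) hpos
  unfold exitPort
  omega

lemma exitPort_zero {c : V × ℕ} (hc : IsState G c) : exitPort G c 0 = c.2 := by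
  rw [exitPort, add_zero, Int.emod_eq_of_lt (by positivity) (by exact_mod_cast hc),
    Int.toNat_natCast]

lemma exitPort_one (c : V × ℕ) : exitPort G c 1 = (c.2 + 1) % G.deg c.1 := by
  rw [exitPort, ← Nat.cast_one, ← Nat.cast_add, ← Int.natCast_emod, Int.toNat_natCast]

lemma exitPort_exitPort_neg {c : V × ℕ} (hc : IsState G c) (e : ℤ) :
    exitPort G (c.1, exitPort G c e) (-e) = c.2 := by
  have hpos : (0 : ℤ) < G.deg c.1 := by unfold IsState at hc; omega
  have hp : (exitPort G c e : ℤ) = ((c.2 : ℤ) + e) % G.deg c.1 :=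
    Int.toNat_of_nonneg (Int.emod_nonneg _ hpos.ne')
  show ((((exitPort G c e : ℕ) : ℤ) + -e) % (G.deg c.1 : ℤ)).toNat = c.2
  rw [hp, Int.emod_add_emod, add_neg_cancel_right,
    Int.emod_eq_of_lt (by positivity) (by exact_mod_cast hc), Int.toNat_natCast]

lemma isState_exStepZ (hG : G.Wf) (c : V × ℕ) (e : ℤ) : IsState G (exStepZ G c e) :=
  hG.2.1 _ _ (exitPort_lt hG c e)

lemma exStepZ_zero {c : V × ℕ} (hc : IsState G c) :
    exStepZ G c 0 = (G.nbr c.1 c.2, G.back c.1 c.2) := by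
  rw [exStepZ_eq, exitPort_zero hc]

lemma exStepZ_exStepZ_zero (hG : G.Wf) (c : V × ℕ) (e : ℤ) :
    exStepZ G (exStepZ G c e) 0 = (c.1, exitPort G c e) := by
  rw [exStepZ_zero (isState_exStepZ hG c e), exStepZ_eq, hG.2.2.1 _ _ (exitPort_lt hG c e),
    hG.2.2.2.1 _ _ (exitPort_lt hG c e)]

lemma exStepZ_neg_exitPort {c : V × ℕ} (hc : IsState G c) (e : ℤ) :
    exStepZ G (c.1, exitPort G c e) (-e) = exStepZ G c 0 := by
  rw [exStepZ_eq, exitPort_exitPort_neg hc, exStepZ_zero hc]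

lemma exStepZ_injOn (hG : G.Wf) (e : ℤ) : Set.InjOn (exStepZ G · e) {c | IsState G c} := by
  intro c hc c' hc' h
  have h₀ := congrArg (exStepZ G · 0) h
  simp only [exStepZ_exStepZ_zero hG, Prod.mk.injEq] at h₀
  ext
  · exact h₀.1
  · rw [← exitPort_exitPort_neg hc e, ← exitPort_exitPort_neg hc' e, h₀.1, h₀.2]

def returnSeq : List ℤ → List ℤ
  | [] => []
  | _ :: rest => 0 :: (rest.map Neg.neg).reverse

/-- Retracing: the offset `0` sends the agent back along the edge it arrived by, and then `-e`
undoes the offset `e` of the step before. -/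
lemma foldl_append_returnSeq (hG : G.Wf) :
    ∀ (rest : List ℤ) (e : ℤ) (c : V × ℕ), IsState G c →
      ((e :: rest) ++ returnSeq (e :: rest)).foldl (exStepZ G) c = (c.1, exitPort G c e)
  | [], e, c, _ => exStepZ_exStepZ_zero hG c e
  | e' :: rest, e, c, hc => by
    have hlist : (e :: e' :: rest) ++ returnSeq (e :: e' :: rest) =
        e :: ((e' :: rest) ++ returnSeq (e' :: rest) ++ [-e']) := by
      simp [returnSeq]
    have hstate := isState_exStepZ hG c e
    rw [hlist, List.foldl_cons, List.foldl_append, foldl_append_returnSeq hG rest e' _ hstate,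
      List.foldl_cons, List.foldl_nil, exStepZ_neg_exitPort hstate, exStepZ_exStepZ_zero hG]

lemma foldl_append_returnSeq_fst (hG : G.Wf) (v₀ : V) (offs : List ℤ) :
    ((offs ++ returnSeq offs).foldl (exStepZ G) (v₀, 0)).1 = v₀ := by
  cases offs with
  | nil => rfl
  | cons e rest => rw [foldl_append_returnSeq hG rest e (v₀, 0) (hG.1 v₀)]

lemma length_returnSeq (offs : List ℤ) : (returnSeq offs).length = offs.length := by
  cases offs <;> simp [returnSeq]

lemma returnSeq_mem_of_forall {offs : List ℤ} (h : ∀ e ∈ offs, e = -1 ∨ e = 0 ∨ e = 1) :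
    ∀ e ∈ returnSeq offs, e = -1 ∨ e = 0 ∨ e = 1 := by
  cases offs with
  | nil => simp [returnSeq]
  | cons e₀ rest =>
    simp only [returnSeq, List.mem_cons, List.mem_reverse, List.mem_map]
    rintro e (rfl | ⟨e', he', rfl⟩)
    · simp
    · rcases h e' (List.mem_cons_of_mem _ he') with rfl | rfl | rfl <;> simp

end Agent

section Exploration

variable {G : PGraph V}

def offset (t : Fin 3) : ℤ := (t : ℤ) - 1

def agentStep (G : PGraph V) (t : Fin 3) (c : V × ℕ) : V × ℕ := exStepZ G c (offset t)

lemma reaches_rotate (hG : G.Wf) (c : V × ℕ) :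
    Reaches (agentStep G) c (c.1, (c.2 + 1) % G.deg c.1) := by
  have h : agentStep G 1 (agentStep G 2 c) = (c.1, (c.2 + 1) % G.deg c.1) := by
    rw [agentStep, agentStep, show offset 2 = 1 from rfl, show offset 1 = 0 from rfl,
      exStepZ_exStepZ_zero hG, exitPort_one]
  exact h ▸ (Relation.ReflTransGen.single ⟨2, rfl⟩).tail ⟨1, rfl⟩

lemma reaches_port (hG : G.Wf) {c : V × ℕ} (hc : IsState G c) {l : ℕ} (hl : l < G.deg c.1) :
    Reaches (agentStep G) c (c.1, l) := by
  have hrot (k : ℕ) : Reaches (agentStep G) c (c.1, (c.2 + k) % G.deg c.1) := by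
    induction k with
    | zero =>
      rw [add_zero, Nat.mod_eq_of_lt hc]
      exact Relation.ReflTransGen.refl
    | succ k ih =>
      have := ih.trans (reaches_rotate hG _)
      rwa [Nat.mod_add_mod, add_assoc] at this
  have := hrot (G.deg c.1 - c.2 + l)
  rwa [show c.2 + (G.deg c.1 - c.2 + l) = G.deg c.1 + l by unfold IsState at hc; omega,
    Nat.add_mod_left, Nat.mod_eq_of_lt hl] at this

lemma reaches_nbr {c : V × ℕ} (hc : IsState G c) :
    Reaches (agentStep G) c (G.nbr c.1 c.2, G.back c.1 c.2) :=
  Relation.ReflTransGen.single ⟨1, exStepZ_zero hc⟩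

lemma exists_reaches_vertex (hG : G.Wf) (hconn : G.Conn) (v₀ v : V) :
    ∃ l, Reaches (agentStep G) (v₀, 0) (v, l) := by
  suffices ∃ l, l < G.deg v ∧ Reaches (agentStep G) (v₀, 0) (v, l) from
    this.imp fun _ => And.right
  induction hconn v₀ v with
  | refl => exact ⟨0, hG.1 v₀, Relation.ReflTransGen.refl⟩
  | tail _ hxy ih =>
    obtain ⟨i, hi, rfl⟩ := hxy
    obtain ⟨l, hl, hreach⟩ := ih
    exact ⟨_, hG.2.1 _ _ hi,
      hreach.trans ((reaches_port hG (c := (_, l)) hl hi).trans (reaches_nbr hi))⟩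

lemma isState_of_mem_scanl (hG : G.Wf) :
    ∀ (w : List ℤ) {s : V × ℕ}, IsState G s → ∀ c ∈ w.scanl (exStepZ G) s, IsState G c
  | [], _, hs, c, hc => by simp_all
  | e :: w, s, hs, c, hc => by
    rw [List.scanl_cons, List.mem_cons] at hc
    rcases hc with rfl | hc
    · exact hs
    · exact isState_of_mem_scanl hG w (isState_exStepZ hG s e) c hc

lemma exists_nbr_eq_of_mem_scanl (hG : G.Wf) :
    ∀ (w : List ℤ) (s : V × ℕ), ∀ c ∈ w.scanl (exStepZ G) s, c ≠ s →
      ∃ c' ∈ w.scanl (exStepZ G) s, c'.1 = G.nbr c.1 c.2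
  | [], _, c, hc, hne => by simp_all
  | e :: w, s, c, hc, hne => by
    rw [List.scanl_cons, List.mem_cons] at hc
    rw [List.scanl_cons]
    rcases hc with rfl | hc
    · exact absurd rfl hne
    by_cases hcs : c = exStepZ G s e
    · refine ⟨s, List.mem_cons_self .., ?_⟩
      rw [hcs, exStepZ_eq, hG.2.2.1 _ _ (exitPort_lt hG s e)]
    · obtain ⟨c', hc', h⟩ := exists_nbr_eq_of_mem_scanl hG w _ c hc hcs
      exact ⟨c', List.mem_cons_of_mem _ hc', h⟩

lemma card_le_card_image_fst_sq_add_one [DecidableEq V] (hG : G.Wf) {D : Finset (V × ℕ)}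
    {s₀ : V × ℕ} (hstate : ∀ c ∈ D, IsState G c)
    (hback : ∀ c ∈ D, c ≠ s₀ → G.nbr c.1 c.2 ∈ D.image Prod.fst) :
    #D ≤ #(D.image Prod.fst) ^ 2 + 1 := by
  have hinj : Set.InjOn (fun c : V × ℕ => (c.1, G.nbr c.1 c.2)) (D.erase s₀) := by
    intro c hc c' hc' h
    simp only [Prod.mk.injEq] at h
    obtain ⟨h₁, h₂⟩ := h
    rw [h₁] at h₂
    have hlt := hstate c (mem_of_mem_erase hc)
    unfold IsState at hlt
    rw [h₁] at hlt
    exact Prod.ext h₁ (hG.2.2.2.2.2 c'.1 hlt (hstate c' (mem_of_mem_erase hc')) h₂)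
  calc #D ≤ #(D.erase s₀) + 1 := by have := pred_card_le_card_erase (s := D) (a := s₀); omega
    _ ≤ #(D.image Prod.fst ×ˢ D.image Prod.fst) + 1 := by
        gcongr
        refine card_le_card_of_injOn _ (fun c hc => ?_) hinj
        have hc' := mem_erase.mp hc
        exact mem_product.mpr ⟨mem_image_of_mem _ hc'.2, hback c hc'.2 hc'.1⟩
    _ = #(D.image Prod.fst) ^ 2 + 1 := by rw [card_product, sq]

lemma image_exPosZ_eq [DecidableEq V] (v₀ : V) (w : List ℤ) :
    (range (w.length + 1)).image (fun j => exPosZ G v₀ w j) =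
      (w.scanl (exStepZ G) (v₀, 0)).toFinset.image Prod.fst := by
  ext v
  simp [List.mem_iff_getElem, List.getElem_scanl, exPosZ]

theorem min_le_card_visited [Fintype V] [DecidableEq V] (hG : G.Wf) (hconn : G.Conn) {z : ℕ}
    {f : List (Fin 3)}
    (huniv : ∀ (σ : Fin 3 → Perm (Fin (2 * z ^ 2))) (d b : Fin (2 * z ^ 2)),
      Reaches (fun e => σ e) d b → b ∈ trace (fun e => σ e) d f)
    (v₀ : V) {w : List ℤ} (hw : f.map offset <+: w) :
    min z (Fintype.card V) ≤ #((w.scanl (exStepZ G) (v₀, 0)).toFinset.image Prod.fst) := by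
  set D := (w.scanl (exStepZ G) (v₀, 0)).toFinset
  by_contra! hlt
  have hstate : ∀ c ∈ D, IsState G c := fun c hc =>
    isState_of_mem_scanl hG w (s := (v₀, 0)) (hG.1 v₀) c (List.mem_toFinset.mp hc)
  have hcard : #D ≤ #(D.image Prod.fst) ^ 2 + 1 := by
    refine card_le_card_image_fst_sq_add_one hG (s₀ := (v₀, 0)) hstate fun c hc hne => ?_
    obtain ⟨c', hc', h⟩ := exists_nbr_eq_of_mem_scanl hG w _ c (List.mem_toFinset.mp hc) hne
    exact mem_image.mpr ⟨c', List.mem_toFinset.mpr hc', h⟩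
  have hD : 2 * #D ≤ Fintype.card (Fin (2 * z ^ 2)) := by
    rw [Fintype.card_fin]
    have : #(D.image Prod.fst) + 1 ≤ z := by omega
    nlinarith
  have htrace : ∀ s ∈ trace (agentStep G) (v₀, 0) f, s ∈ D := by
    obtain ⟨rest, rfl⟩ := hw
    intro s hs
    rw [List.mem_toFinset, List.scanl_append]
    exact List.mem_append_left _ (by simpa [trace, List.scanl_map, agentStep] using hs)
  have hall : (univ : Finset V) ⊆ D.image Prod.fst := fun v _ => by
    obtain ⟨l, hl⟩ := exists_reaches_vertex hG hconn v₀ v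
    exact mem_image_of_mem Prod.fst (hl.mem_of_universal huniv
      (fun t => (exStepZ_injOn hG (offset t)).mono hstate) hD htrace)
  have := card_le_card hall
  rw [card_univ] at this
  omega

end Exploration

def explorationSeq (f : List (Fin 3)) : List ℤ := f.map offset ++ returnSeq (f.map offset)

lemma explorationSeq_mem (f : List (Fin 3)) :
    ∀ e ∈ explorationSeq f, e = -1 ∨ e = 0 ∨ e = 1 := by
  have hoff : ∀ e ∈ f.map offset, e = -1 ∨ e = 0 ∨ e = 1 := by
    simp only [List.mem_map]
    rintro e ⟨t, -, rfl⟩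
    fin_cases t <;> decide
  intro e he
  rcases List.mem_append.mp he with he | he
  · exact hoff e he
  · exact returnSeq_mem_of_forall hoff e he

lemma length_explorationSeq (f : List (Fin 3)) : (explorationSeq f).length = 2 * f.length := by
  simp [explorationSeq, length_returnSeq, two_mul]

lemma length_explorationSeq_le {z : ℕ} (hz : 2 ≤ z) {f : List (Fin 3)}
    (hf : f.length = 8 * 3 * (2 * z ^ 2) ^ 4 * (3 * (2 * z ^ 2) + 2)) :
    (explorationSeq f).length ≤ z ^ 23 := by
  have h₁ : 2 ≤ z ^ 2 := by nlinarith
  have h₂ : 2 ^ 13 ≤ z ^ 13 := Nat.pow_le_pow_left hz 13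
  calc (explorationSeq f).length = 2 * (8 * 3 * (2 * z ^ 2) ^ 4 * (3 * (2 * z ^ 2) + 2)) := by
        rw [length_explorationSeq, hf]
    _ ≤ 2 * (8 * 3 * (2 * z ^ 2) ^ 4 * (7 * z ^ 2)) := by gcongr; omega
    _ ≤ 2 ^ 13 * z ^ 10 := by ring_nf; omega
    _ ≤ z ^ 13 * z ^ 10 := Nat.mul_le_mul_right _ h₂
    _ = z ^ 23 := by ring

/-- There is a constant `C` such that for every `z` there is an
exploration sequence `w ∈ {-1,0,1}*` of length at most `z ^ C` such that in every
connected graph `G` on `n` vertices, from every starting vertex, an agent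
following `w` visits at least `min z n` distinct vertices and returns to its
starting vertex (the walk is closed). -/
theorem short_uxs_general :
    ∃ C : ℕ, 0 < C ∧ ∀ z : ℕ, ∃ w : List ℤ,
      (∀ e ∈ w, e = -1 ∨ e = 0 ∨ e = 1) ∧ w.length ≤ z ^ C ∧
      ∀ (n : ℕ) (G : PGraph (Fin n)), 0 < n → G.Wf → G.Conn → ∀ v0 : Fin n,
        min z n ≤ ((Finset.range (w.length + 1)).image (fun j => exPosZ G v0 w j)).card ∧
        exPosZ G v0 w w.length = v0 := by
  refine ⟨23, by norm_num, fun z => ?_⟩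
  rcases lt_or_ge z 2 with hz | hz
  · refine ⟨[], by simp, by simp, fun n G _ _ _ v0 => ⟨?_, rfl⟩⟩
    simp only [List.length_nil, zero_add, range_one, image_singleton, card_singleton, inf_le_iff]
    omega
  obtain ⟨f, hflen, huniv⟩ := exists_universal_word (ι := Fin 3) (Fin (2 * z ^ 2))
  refine ⟨explorationSeq f, explorationSeq_mem f, ?_, fun n G _ hG hconn v0 => ⟨?_, ?_⟩⟩
  · exact length_explorationSeq_le hz (by simpa using hflen)
  · rw [image_exPosZ_eq]
    simpa using
      min_le_card_visited hG hconn huniv v0 (w := explorationSeq f) (List.prefix_append _ _)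
  · rw [exPosZ, List.take_length]
    exact foldl_append_returnSeq_fst hG v0 _
end
end
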